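/- Let S be a complete star-omega semiring, Σ an alphabet, and C = (n, I, M, P, k) an S⟨Σ∪{ε}⟩-ω-restricted one-counter automaton with M_{p,p²} = (a_{ij}), M_{p,p} = (c_{ij}), M_{p,ε} = (b_{ij}). Then (σ₀, (((M*)_{p,ε})_{ij})_{1≤i,j≤n}, τ₀, (((M^{ω,k})_p)_i)_{1≤i≤n}) is a solution of the componentwise mixed algebraic system x₀ = Σ_{m₁,m₂} I_{m₁}[m₁,p,m₂]P_{m₂}; [i,p,j] = Σ_{m₁,m₂} a_{im₁}[m₁,p,m₂][m₂,p,j] + Σ_m c_{im}[m,p,j] + b_{ij}; z₀ = Σ_m I_m[m,p]; [i,p] = Σ_m a_{im}[m,p] + Σ_{m₁,m₂} a_{im₁}[m₁,p,m₂][m₂,p] + Σ_m c_{im}[m,p] (for all 1 ≤ i, j ≤ n) over (S⟪Σ*⟫, S⟪Σ^ω⟫), where ‖C‖ = (σ₀, τ₀). -/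

import Mathlib

/-!
Common definitions: complete semirings with infinite sums, complete
semiring-semimodule pairs with infinite products, restricted one-counter
(roc) matrices, their star and omega blocks, power series over finite and
infinite words, weighted ω-restricted one-counter automata, and the mixed
context-free grammars obtained by the triple-pair construction.
-/

/-- The data of a semiring together with sums over arbitrary index sets. -/
structure CSOps (S : Type) where
  add : S → S → S
  mul : S → S → S
  zero : S
  one : S
  iSum : ∀ {ι : Type}, (ι → S) → S

namespace CSOps

variable {S : Type}

/-- Powers `a^m`. -/
def pow (R : CSOps S) (a : S) : ℕ → S
  | 0 => R.one
  | m + 1 => R.mul a (R.pow a m)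

/-- The star operation of a complete starsemiring: `a* = Σ_{m≥0} a^m`. -/
def star (R : CSOps S) (a : S) : S := R.iSum fun m : ℕ => R.pow a m

/-- Finite sums of lists of elements. -/
def listSum (R : CSOps S) (l : List S) : S := l.foldr R.add R.zero

/-- Finite (ordered) products of lists of elements. -/
def listProd (R : CSOps S) (l : List S) : S := l.foldr R.mul R.one

/-- The ordered product `s_a · s_{a+1} ⋯ s_{b-1}`. -/
def rangeProd (R : CSOps S) (s : ℕ → S) (a b : ℕ) : S :=
  R.listProd ((List.range' a (b - a)).map s)

/-- `R` is a complete semiring: the operations form a semiring, the infinite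
sums extend the finite ones, are associative and commutative (compatible with
arbitrary partitions of the index set) and satisfy both distributive laws. -/
structure IsComplete (R : CSOps S) : Prop where
  add_assoc : ∀ a b c, R.add (R.add a b) c = R.add a (R.add b c)
  add_comm : ∀ a b, R.add a b = R.add b a
  zero_add : ∀ a, R.add R.zero a = a
  mul_assoc : ∀ a b c, R.mul (R.mul a b) c = R.mul a (R.mul b c)
  one_mul : ∀ a, R.mul R.one a = a
  mul_one : ∀ a, R.mul a R.one = a
  zero_mul : ∀ a, R.mul R.zero a = R.zero
  mul_zero : ∀ a, R.mul a R.zero = R.zero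
  left_distrib : ∀ a b c, R.mul a (R.add b c) = R.add (R.mul a b) (R.mul a c)
  right_distrib : ∀ a b c, R.mul (R.add a b) c = R.add (R.mul a c) (R.mul b c)
  iSum_empty : ∀ {ι : Type} (f : ι → S), IsEmpty ι → R.iSum f = R.zero
  iSum_single : ∀ {ι : Type} (f : ι → S) (i₀ : ι), (∀ i, i = i₀) → R.iSum f = f i₀
  iSum_pair : ∀ {ι : Type} (f : ι → S) (i₀ i₁ : ι), i₀ ≠ i₁ → (∀ i, i = i₀ ∨ i = i₁) →
      R.iSum f = R.add (f i₀) (f i₁)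
  iSum_partition : ∀ {ι κ : Type} (g : ι → κ) (f : ι → S),
      R.iSum (fun j : κ => R.iSum (fun i : {i : ι // g i = j} => f i.1)) = R.iSum f
  mul_iSum : ∀ {ι : Type} (c : S) (f : ι → S), R.mul c (R.iSum f) = R.iSum fun i => R.mul c (f i)
  iSum_mul : ∀ {ι : Type} (c : S) (f : ι → S), R.mul (R.iSum f) c = R.iSum fun i => R.mul (f i) c

/-- `R` is a continuous starsemiring: it is complete and every infinite sum is
the least upper bound, with respect to the natural order `a ≤ b ↔ ∃ c, a + c = b`,
of the sums over the finite subfamilies. -/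
structure IsContinuous (R : CSOps S) : Prop where
  complete : R.IsComplete
  finsumLe : ∀ {ι : Type} (f : ι → S) (l : List ι), l.Nodup →
      ∃ c, R.add (R.listSum (l.map f)) c = R.iSum f
  iSumLeast : ∀ {ι : Type} (f : ι → S) (b : S),
      (∀ l : List ι, l.Nodup → ∃ c, R.add (R.listSum (l.map f)) c = b) →
      ∃ c, R.add (R.iSum f) c = b

end CSOps

/-- The data of a left `S`-semimodule `V` with sums over arbitrary index sets and
an infinite product operation mapping infinite sequences over `S` to `V`. -/
structure CPOps (S V : Type) where
  vadd : V → V → V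
  vzero : V
  smul : S → V → V
  vSum : ∀ {ι : Type}, (ι → V) → V
  iProd : (ℕ → S) → V

namespace CPOps

variable {S V : Type}

/-- `(S, V)` (with operations `R`, `P`) is a complete semiring-semimodule pair. -/
structure IsComplete (R : CSOps S) (P : CPOps S V) : Prop where
  vadd_assoc : ∀ u v w, P.vadd (P.vadd u v) w = P.vadd u (P.vadd v w)
  vadd_comm : ∀ u v, P.vadd u v = P.vadd v u
  vzero_vadd : ∀ v, P.vadd P.vzero v = v
  mul_smul : ∀ a b v, P.smul (R.mul a b) v = P.smul a (P.smul b v)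
  one_smul : ∀ v, P.smul R.one v = v
  add_smul : ∀ a b v, P.smul (R.add a b) v = P.vadd (P.smul a v) (P.smul b v)
  smul_vadd : ∀ a u v, P.smul a (P.vadd u v) = P.vadd (P.smul a u) (P.smul a v)
  zero_smul : ∀ v, P.smul R.zero v = P.vzero
  smul_vzero : ∀ a, P.smul a P.vzero = P.vzero
  vSum_empty : ∀ {ι : Type} (f : ι → V), IsEmpty ι → P.vSum f = P.vzero
  vSum_single : ∀ {ι : Type} (f : ι → V) (i₀ : ι), (∀ i, i = i₀) → P.vSum f = f i₀
  vSum_pair : ∀ {ι : Type} (f : ι → V) (i₀ i₁ : ι), i₀ ≠ i₁ → (∀ i, i = i₀ ∨ i = i₁) →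
      P.vSum f = P.vadd (f i₀) (f i₁)
  vSum_partition : ∀ {ι κ : Type} (g : ι → κ) (f : ι → V),
      P.vSum (fun j : κ => P.vSum (fun i : {i : ι // g i = j} => f i.1)) = P.vSum f
  smul_vSum : ∀ {ι : Type} (a : S) (f : ι → V),
      P.smul a (P.vSum f) = P.vSum fun i => P.smul a (f i)
  iSum_smul : ∀ {ι : Type} (f : ι → S) (v : V),
      P.smul (R.iSum f) v = P.vSum fun i => P.smul (f i) v
  iProd_regroup : ∀ (s : ℕ → S) (e : ℕ → ℕ), e 0 = 0 → Monotone e →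
      P.iProd s = P.iProd fun i => R.rangeProd s (e i) (e (i + 1))
  smul_iProd_shift : ∀ s : ℕ → S, P.smul (s 0) (P.iProd fun i => s (i + 1)) = P.iProd s
  iProd_iSum : ∀ (I : ℕ → Type) (s : ∀ j, I j → S),
      P.iProd (fun j => R.iSum (s j)) = P.vSum fun f : (∀ j, I j) => P.iProd fun j => s j (f j)

end CPOps

/-! ### Matrices of blocks indexed by the counter contents `p^i ↔ i` -/

/-- An `n × n` block of weights. -/
abbrev Blk (n : ℕ) (S : Type) := Fin n → Fin n → S

def bZero {S : Type} (R : CSOps S) {n : ℕ} : Blk n S := fun _ _ => R.zero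

def bOne {S : Type} (R : CSOps S) {n : ℕ} : Blk n S :=
  fun i j => if i = j then R.one else R.zero

def bAdd {S : Type} (R : CSOps S) {n : ℕ} (X Y : Blk n S) : Blk n S :=
  fun i j => R.add (X i j) (Y i j)

def bMul {S : Type} (R : CSOps S) {n : ℕ} (X Y : Blk n S) : Blk n S :=
  fun i j => R.iSum fun l : Fin n => R.mul (X i l) (Y l j)

def bPow {S : Type} (R : CSOps S) {n : ℕ} (X : Blk n S) : ℕ → Blk n S
  | 0 => bOne R
  | m + 1 => bMul R X (bPow R X m)

/-- A matrix in `(S^{n×n})^{p* × p*}`: rows and columns are indexed by the words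
`p^i` (identified with `i : ℕ`) and the entries are `n × n` blocks over `S`. -/
abbrev IMat (n : ℕ) (S : Type) := ℕ → ℕ → Blk n S

def iMatMul {S : Type} (R : CSOps S) {n : ℕ} (M N : IMat n S) : IMat n S :=
  fun i j => fun a b => R.iSum fun l : ℕ => bMul R (M i l) (N l j) a b

def iMatOne {S : Type} (R : CSOps S) {n : ℕ} : IMat n S :=
  fun i j => if i = j then bOne R else bZero R

def iMatPow {S : Type} (R : CSOps S) {n : ℕ} (M : IMat n S) : ℕ → IMat n S
  | 0 => iMatOne R
  | m + 1 => iMatMul R M (iMatPow R M m)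

/-- `iStar R M i j` is the block `(M*)_{p^i, p^j} = Σ_{m≥0} (M^m)_{p^i, p^j}`. -/
def iStar {S : Type} (R : CSOps S) {n : ℕ} (M : IMat n S) : IMat n S :=
  fun i j => fun a b => R.iSum fun m : ℕ => iMatPow R M m i j a b

/-- `M` is a restricted one-counter (roc) matrix (with counter symbol `p`):
there are blocks `A = M_{p,p²}`, `C = M_{p,p}`, `B = M_{p,ε}` with
`M_{p^k,p^{k+1}} = A`, `M_{p^k,p^k} = C`, `M_{p^k,p^{k-1}} = B` for all `k ≥ 1`,
and all other blocks are `0`. -/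
def IsRoc {S : Type} (R : CSOps S) {n : ℕ} (M : IMat n S) : Prop :=
  (∀ k : ℕ, 1 ≤ k → M k (k + 1) = M 1 2 ∧ M k k = M 1 1 ∧ M k (k - 1) = M 1 0) ∧
  (∀ i j : ℕ, (i = 0 ∨ (j ≠ i + 1 ∧ j ≠ i ∧ j + 1 ≠ i)) → M i j = bZero R)

/-! ### Vectors over the semimodule -/

def vecAdd {S V : Type} (P : CPOps S V) {n : ℕ} (u v : Fin n → V) : Fin n → V :=
  fun a => P.vadd (u a) (v a)

/-- A block acting on a vector of semimodule elements: `(X z)_a = Σ_l X_{a l} z_l`. -/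
def matVec {S V : Type} (P : CPOps S V) {n : ℕ} (X : Blk n S) (v : Fin n → V) : Fin n → V :=
  fun a => P.vSum fun l : Fin n => P.smul (X a l) (v l)

/-- A row vector acting on a column vector of semimodule elements: `I z = Σ_m I_m z_m`. -/
def rowAct {S V : Type} (P : CPOps S V) {n : ℕ} (Iv : Fin n → S) (v : Fin n → V) : V :=
  P.vSum fun m : Fin n => P.smul (Iv m) (v m)

/-- The scalar `I · X · P = Σ_{m₁,m₂} I_{m₁} X_{m₁ m₂} P_{m₂}`. -/
def tripleProd {S : Type} (R : CSOps S) {n : ℕ} (Iv : Fin n → S) (X : Blk n S)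
    (Pv : Fin n → S) : S :=
  R.iSum fun q : Fin n × Fin n => R.mul (Iv q.1) (R.mul (X q.1 q.2) (Pv q.2))

/-- The sequence of weights along an infinite path starting in row block `p^i`,
state `j`, and then visiting the blocks `p^{hs 0}, p^{hs 1}, …` in states
`js 0, js 1, …`. -/
def pathEntry {S : Type} {n : ℕ} (M : IMat n S) (i : ℕ) (j : Fin n)
    (hs : ℕ → ℕ) (js : ℕ → Fin n) : ℕ → S
  | 0 => M i (hs 0) j (js 0)
  | t + 1 => M (hs t) (hs (t + 1)) (js t) (js (t + 1))

/-- The block `(M^ω)_{p^i}` of the column vector `M^ω ∈ (V^n)^{p*}`: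
`((M^ω)_{p^i})_j` is the sum over all infinite sequences of pushdown contents and
states of the infinite products of the corresponding entries of `M`. -/
def mOmega {S V : Type} (P : CPOps S V) {n : ℕ} (M : IMat n S) (i : ℕ) : Fin n → V :=
  fun j => P.vSum fun q : (ℕ → ℕ) × (ℕ → Fin n) => P.iProd (pathEntry M i j q.1 q.2)

/-- `P_k`: the sequences of states (states `1,…,n` being represented by `Fin n`,
state `j+1` by `j : Fin n`) that are `≤ k` (i.e. have representative `< k`)
infinitely often — the Büchi condition with repeated states `{1, …, k}`. -/
def InPk (n k : ℕ) (js : ℕ → Fin n) : Prop := ∀ N : ℕ, ∃ t, N ≤ t ∧ (js t : ℕ) < k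

/-- The block `(M^{ω,k})_{p^i}` of the column vector `M^{ω,k} ∈ (V^n)^{p*}`:
the sum over all infinite sequences `i₁, i₂, … ≥ 1` of pushdown contents and all
state sequences in `P_k` of the infinite products of the corresponding entries. -/
def mOmegaK {S V : Type} (P : CPOps S V) {n : ℕ} (M : IMat n S) (k : ℕ) (i : ℕ) :
    Fin n → V :=
  fun j => P.vSum fun q : {q : (ℕ → ℕ) × (ℕ → Fin n) // (∀ t, 1 ≤ q.1 t) ∧ InPk n k q.2} =>
    P.iProd (pathEntry M i j q.1.1 q.1.2)

/-! ### The algebraic systems -/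

/-- The right-hand side `A x x + C x + B` of the algebraic system
`x = M_{p,p²} x x + M_{p,p} x + M_{p,ε}`. -/
def quadRhs {S : Type} (R : CSOps S) {n : ℕ} (Ablk Cblk Bblk X : Blk n S) : Blk n S :=
  bAdd R (bAdd R (bMul R Ablk (bMul R X X)) (bMul R Cblk X)) Bblk

/-- `X` is a solution of `x = A x x + C x + B`. -/
def IsQuadSol {S : Type} (R : CSOps S) {n : ℕ} (Ablk Cblk Bblk X : Blk n S) : Prop :=
  X = quadRhs R Ablk Cblk Bblk X

/-- The matrix `M_{p,p²} + M_{p,p²}(M*)_{p,ε} + M_{p,p}`. -/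
def linMat {S : Type} (R : CSOps S) {n : ℕ} (M : IMat n S) : Blk n S :=
  bAdd R (bAdd R (M 1 2) (bMul R (M 1 2) (iStar R M 1 0))) (M 1 1)

/-- `z` is a solution of the linear equation
`z = (M_{p,p²} + M_{p,p²}(M*)_{p,ε} + M_{p,p}) z` over `V^n`. -/
def IsLinSol {S V : Type} (R : CSOps S) (P : CPOps S V) {n : ℕ} (M : IMat n S)
    (z : Fin n → V) : Prop :=
  z = matVec P (linMat R M) z

/-- The right-hand side `A z + (A x) z + C z` of the linear system
`z = M_{p,p²} z + M_{p,p²} x z + M_{p,p} z`. -/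
def zRhs {S V : Type} (R : CSOps S) (P : CPOps S V) {n : ℕ} (Ablk Cblk x : Blk n S)
    (z : Fin n → V) : Fin n → V :=
  vecAdd P (vecAdd P (matVec P Ablk z) (matVec P (bMul R Ablk x) z)) (matVec P Cblk z)

/-- The behavior `‖C‖ = (I (M*)_{p,ε} P, I (M^{ω,k})_p)` of an
`ω`-restricted one-counter automaton. -/
def rocBehavior {S V : Type} (R : CSOps S) (P : CPOps S V) {n : ℕ} (M : IMat n S)
    (Iv Pv : Fin n → S) (k : ℕ) : S × V :=
  (tripleProd R Iv (iStar R M 1 0) Pv, rowAct P Iv (mOmegaK P M k 1))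

/-! ### Power series over finite and infinite words -/

open Classical in
/-- The complete semiring `S⟪Σ*⟫` of power series over finite words,
with the Cauchy product. -/
noncomputable def finOps {S : Type} (R : CSOps S) (A : Type) : CSOps (List A → S) where
  add s t := fun w => R.add (s w) (t w)
  mul s t := fun w =>
    R.iSum fun u : {u : List A × List A // u.1 ++ u.2 = w} => R.mul (s u.1.1) (t u.1.2)
  zero := fun _ => R.zero
  one := fun w => if w = [] then R.one else R.zero
  iSum f := fun w => R.iSum fun i => f i w

/-- Concatenation of a finite word with an ω-word. -/
def wcat {A : Type} (u : List A) (v : ℕ → A) : ℕ → A :=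
  fun t => if h : t < u.length then u.get ⟨t, h⟩ else v (t - u.length)

/-- Lengths of the partial concatenations of a sequence of finite words. -/
def flen {A : Type} (f : ℕ → List A) : ℕ → ℕ
  | 0 => 0
  | m + 1 => flen f m + (f m).length

/-- `f 0, f 1, f 2, …` is a factorization of the ω-word `w` into finite words:
the concatenation `f 0 · f 1 · ⋯` equals `w`. -/
def IsFact {A : Type} (f : ℕ → List A) (w : ℕ → A) : Prop :=
  (∀ N : ℕ, ∃ m, N ≤ flen f m) ∧
  (∀ (m i : ℕ) (h : i < (f m).length), (f m).get ⟨i, h⟩ = w (flen f m + i))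

/-- The complete semimodule pair operations on `(S⟪Σ*⟫, S⟪Σ^ω⟫)`, for a complete
star-omega semiring `S` given by `R` (sums) and `P0` (the infinite product of
the complete semiring-semimodule pair `(S, S)`). -/
def omOps {S : Type} (R : CSOps S) (P0 : CPOps S S) (A : Type) :
    CPOps (List A → S) ((ℕ → A) → S) where
  vadd s t := fun w => R.add (s w) (t w)
  vzero := fun _ => R.zero
  smul s t := fun w =>
    R.iSum fun u : {u : List A × (ℕ → A) // wcat u.1 u.2 = w} => R.mul (s u.1.1) (t u.1.2)
  vSum f := fun w => R.iSum fun i => f i w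
  iProd s := fun w =>
    R.iSum fun f : {f : ℕ → List A // IsFact f w} => P0.iProd fun j => s j (f.1 j)

/-- A series is a polynomial supported on `Σ ∪ {ε}`, i.e. an element of
`S⟨Σ ∪ {ε}⟩`: its coefficients vanish on words of length `≥ 2`. -/
def PolySupp {S : Type} (R : CSOps S) {A : Type} (s : List A → S) : Prop :=
  ∀ w : List A, 2 ≤ w.length → s w = R.zero

/-! ### The mixed context-free grammar of the triple-pair construction -/

/-- Variables for finite derivations: `x₀` and the triples `[i, p, j]`. -/
inductive XVar (n : ℕ) where
  | x0 : XVar n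
  | tr : Fin n → Fin n → XVar n

/-- Variables for infinite derivations: `z₀` and the pairs `[i, p]`. -/
inductive ZVar (n : ℕ) where
  | z0 : ZVar n
  | pr : Fin n → ZVar n

/-- Sentential forms over the variables for finite derivations and terminals. -/
abbrev SForm (n : ℕ) (A : Type) := List (XVar n ⊕ A)

/-- The productions `P_X` for finite derivations of the grammar `G_k`
constructed from a roc automaton with matrix blocks `M`, initial vector `Iv`
and final vector `Pv` (here `a, b` range over `Σ ∪ {ε}`, represented by words
of length at most one). -/
inductive XProd {K : Type} (R : CSOps K) {n : ℕ} {A : Type} (M : IMat n (List A → K))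
    (Iv Pv : Fin n → List A → K) : XVar n → SForm n A → Prop where
  | start (a b : List A) (m₁ m₂ : Fin n) : a.length ≤ 1 → b.length ≤ 1 →
      R.mul (Iv m₁ a) (Pv m₂ b) ≠ R.zero →
      XProd R M Iv Pv XVar.x0 (a.map Sum.inr ++ Sum.inl (XVar.tr m₁ m₂) :: b.map Sum.inr)
  | push (a : List A) (i j m₁ m₂ : Fin n) : a.length ≤ 1 → M 1 2 i m₁ a ≠ R.zero →
      XProd R M Iv Pv (XVar.tr i j)
        (a.map Sum.inr ++ [Sum.inl (XVar.tr m₁ m₂), Sum.inl (XVar.tr m₂ j)])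
  | stay (a : List A) (i j m : Fin n) : a.length ≤ 1 → M 1 1 i m a ≠ R.zero →
      XProd R M Iv Pv (XVar.tr i j) (a.map Sum.inr ++ [Sum.inl (XVar.tr m j)])
  | pop (a : List A) (i j : Fin n) : a.length ≤ 1 → M 1 0 i j a ≠ R.zero →
      XProd R M Iv Pv (XVar.tr i j) (a.map Sum.inr)

/-- The productions `P_Z` for infinite derivations: `ZProd R M Iv W α m` states
that `W → α [m, p]` is a production, where `α` is the part of the right-hand
side over `X ∪ Σ` and `[m, p]` is the trailing variable for infinite derivations. -/
inductive ZProd {K : Type} (R : CSOps K) {n : ℕ} {A : Type} (M : IMat n (List A → K))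
    (Iv : Fin n → List A → K) : ZVar n → SForm n A → Fin n → Prop where
  | init (a : List A) (m : Fin n) : a.length ≤ 1 → Iv m a ≠ R.zero →
      ZProd R M Iv ZVar.z0 (a.map Sum.inr) m
  | push (a : List A) (i m : Fin n) : a.length ≤ 1 → M 1 2 i m a ≠ R.zero →
      ZProd R M Iv (ZVar.pr i) (a.map Sum.inr) m
  | pushTr (a : List A) (i m₁ m₂ : Fin n) : a.length ≤ 1 → M 1 2 i m₁ a ≠ R.zero →
      ZProd R M Iv (ZVar.pr i) (a.map Sum.inr ++ [Sum.inl (XVar.tr m₁ m₂)]) m₂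
  | stay (a : List A) (i m : Fin n) : a.length ≤ 1 → M 1 1 i m a ≠ R.zero →
      ZProd R M Iv (ZVar.pr i) (a.map Sum.inr) m

/-- One leftmost derivation step: the leftmost variable is rewritten. -/
inductive LMStep {n : ℕ} {A : Type} (Px : XVar n → SForm n A → Prop) :
    SForm n A → SForm n A → Prop where
  | mk (u : List A) (X : XVar n) (β rest : SForm n A) : Px X β →
      LMStep Px (u.map Sum.inr ++ Sum.inl X :: rest) (u.map Sum.inr ++ (β ++ rest))

/-- The finite-word part of the language of the grammar:
`{w ∈ Σ* | x₀ ⇒_L^* w}`. -/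
def FinLang {K : Type} (R : CSOps K) {n : ℕ} {A : Type} (M : IMat n (List A → K))
    (Iv Pv : Fin n → List A → K) : Set (List A) :=
  {w | Relation.ReflTransGen (LMStep (XProd R M Iv Pv)) [Sum.inl XVar.x0] (w.map Sum.inr)}

/-- The set of finite leftmost derivations of the word `w` from `x₀`: lists of
sentential forms beginning with `x₀`, ending with `w`, each step being a
leftmost rewriting by a production of `P_X`. -/
def finDerivSet {K : Type} (R : CSOps K) {n : ℕ} {A : Type} (M : IMat n (List A → K))
    (Iv Pv : Fin n → List A → K) (w : List A) : Set (List (SForm n A)) :=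
  {l | l.Chain' (LMStep (XProd R M Iv Pv)) ∧ l.head? = some [Sum.inl XVar.x0] ∧
       l.getLast? = some (w.map Sum.inr)}

/-- The leftmost variable of a sentential form (the one rewritten in a leftmost
derivation step). -/
def leftVar {n : ℕ} {A : Type} (α : SForm n A) : Option (XVar n) :=
  (α.filterMap Sum.getLeft?).head?

/-- An infinite (leftmost) derivation
`z₀ ⇒_L α₀[i₀,p] ⇒_L^* w₀[i₀,p] ⇒_L w₀α₁[i₁,p] ⇒_L^* w₀w₁[i₁,p] ⇒_L ⋯`:
the data of the states `i₀, i₁, …`, the sentential forms `α₀, α₁, …`, the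
produced finite words `w₀, w₁, …` and the finite leftmost derivations
`α_m ⇒_L^* w_m`. -/
structure InfDeriv {K : Type} (R : CSOps K) {n : ℕ} {A : Type} (M : IMat n (List A → K))
    (Iv Pv : Fin n → List A → K) where
  iseq : ℕ → Fin n
  alph : ℕ → SForm n A
  wseq : ℕ → List A
  fder : ℕ → List (SForm n A)
  hz0 : ZProd R M Iv ZVar.z0 (alph 0) (iseq 0)
  hz : ∀ m, ZProd R M Iv (ZVar.pr (iseq m)) (alph (m + 1)) (iseq (m + 1))
  hchain : ∀ m, (fder m).Chain' (LMStep (XProd R M Iv Pv))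
  hhead : ∀ m, (fder m).head? = some (alph m)
  hlast : ∀ m, (fder m).getLast? = some ((wseq m).map Sum.inr)

/-- The infinite derivation produces the ω-word `w = w₀ w₁ w₂ ⋯`. -/
def InfDeriv.Produces {K : Type} {R : CSOps K} {n : ℕ} {A : Type}
    {M : IMat n (List A → K)} {Iv Pv : Fin n → List A → K}
    (d : InfDeriv R M Iv Pv) (w : ℕ → A) : Prop :=
  IsFact d.wseq w

/-- The Büchi condition of an `(ω,k)`-derivation: the sequence of first
components of the variables rewritten (`i₀, i₁^1, …, i₁^{t₁}, i₁, i₂^1, …`)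
lies in `P_k`, i.e. hits `{1, …, k}` (represented by `Fin`-values `< k`)
infinitely often. -/
def InfDeriv.Buchi {K : Type} {R : CSOps K} {n : ℕ} {A : Type}
    {M : IMat n (List A → K)} {Iv Pv : Fin n → List A → K}
    (d : InfDeriv R M Iv Pv) (k : ℕ) : Prop :=
  ∀ N : ℕ, ∃ m, N ≤ m ∧ ((d.iseq m : ℕ) < k ∨
    ∃ α ∈ (d.fder m).dropLast, ∃ i j : Fin n,
      leftVar α = some (XVar.tr i j) ∧ (i : ℕ) < k)

/-- The infinite-word part of the language of the grammar `G_k`: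
`{w ∈ Σ^ω | z₀ ⇒_L^{ω,k} w}`. -/
def InfLang {K : Type} (R : CSOps K) {n : ℕ} {A : Type} (M : IMat n (List A → K))
    (Iv Pv : Fin n → List A → K) (k : ℕ) : Set (ℕ → A) :=
  {w | ∃ d : InfDeriv R M Iv Pv, d.Produces w ∧ d.Buchi k}

/-! ### Computations of an ω-restricted one-counter automaton -/

/-- One computation step between instantaneous descriptions
`(state, remaining input, counter)`. -/
def CompStep {K : Type} (R : CSOps K) {n : ℕ} {A : Type} (M : IMat n (List A → K)) :
    (Fin n × List A × ℕ) → (Fin n × List A × ℕ) → Prop := fun c c' =>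
  ∃ a : List A, a.length ≤ 1 ∧ c.2.1 = a ++ c'.2.1 ∧ 1 ≤ c.2.2 ∧
    ((c'.2.2 = c.2.2 + 1 ∧ M 1 2 c.1 c'.1 a ≠ R.zero) ∨
     (c'.2.2 = c.2.2 ∧ M 1 1 c.1 c'.1 a ≠ R.zero) ∨
     (c'.2.2 + 1 = c.2.2 ∧ M 1 0 c.1 c'.1 a ≠ R.zero))

/-- The set of finite computations on input `w`: from an initial instantaneous
description `(i, w, p)` with `I_i ≠ 0` to an accepting instantaneous
description `(j, ε, ε)` with `P_j ≠ 0`. -/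
def finCompSet {K : Type} (R : CSOps K) {n : ℕ} {A : Type} (M : IMat n (List A → K))
    (Iv Pv : Fin n → List A → K) (w : List A) : Set (List (Fin n × List A × ℕ)) :=
  {l | l.Chain' (CompStep R M) ∧
       (∃ i : Fin n, Iv i ≠ (fun _ => R.zero) ∧ l.head? = some (i, w, 1)) ∧
       (∃ j : Fin n, Pv j ≠ (fun _ => R.zero) ∧ l.getLast? = some (j, [], 0))}

/-- An infinite computation of the automaton starting in an initial
instantaneous description `(i, ·, p)` with `I_i ≠ 0`: the sequences of states,
counter values and read letters (`rd m ∈ Σ ∪ {ε}`). -/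
structure InfComp {K : Type} (R : CSOps K) {n : ℕ} {A : Type} (M : IMat n (List A → K))
    (Iv : Fin n → List A → K) where
  st : ℕ → Fin n
  ct : ℕ → ℕ
  rd : ℕ → List A
  hI : Iv (st 0) ≠ fun _ => R.zero
  hct0 : ct 0 = 1
  hlen : ∀ m, (rd m).length ≤ 1
  hpos : ∀ m, 1 ≤ ct m
  hstep : ∀ m,
    (ct (m + 1) = ct m + 1 ∧ M 1 2 (st m) (st (m + 1)) (rd m) ≠ R.zero) ∨
    (ct (m + 1) = ct m ∧ M 1 1 (st m) (st (m + 1)) (rd m) ≠ R.zero) ∨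
    (ct (m + 1) + 1 = ct m ∧ M 1 0 (st m) (st (m + 1)) (rd m) ≠ R.zero)

/-- The infinite computation reads exactly the ω-word `w`. -/
def InfComp.Reads {K : Type} {R : CSOps K} {n : ℕ} {A : Type}
    {M : IMat n (List A → K)} {Iv : Fin n → List A → K}
    (d : InfComp R M Iv) (w : ℕ → A) : Prop :=
  IsFact d.rd w

/-- The infinite computation visits the repeated states `{1, …, k}` infinitely
often. -/
def InfComp.Buchi {K : Type} {R : CSOps K} {n : ℕ} {A : Type}
    {M : IMat n (List A → K)} {Iv : Fin n → List A → K}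
    (d : InfComp R M Iv) (k : ℕ) : Prop :=
  ∀ N : ℕ, ∃ m, N ≤ m ∧ (d.st m : ℕ) < k

/-! ### The complete star-omega semirings `𝔹` and `ℕ^∞` -/

open Classical in
/-- The complete semiring `𝔹 = ({0,1}, ∨, ∧, *, 0, 1)`. -/
noncomputable def boolCS : CSOps Bool where
  add a b := a || b
  mul a b := a && b
  zero := false
  one := true
  iSum f := decide (∃ i, f i = true)

open Classical in
/-- The complete semiring-semimodule pair `(𝔹, 𝔹)`, with the infinite product
making `𝔹` a complete star-omega semiring. -/
noncomputable def boolCP : CPOps Bool Bool where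
  vadd a b := a || b
  vzero := false
  smul a b := a && b
  vSum f := decide (∃ i, f i = true)
  iProd s := decide (∀ i, s i = true)

/-- The complete semiring `ℕ^∞ = (ℕ ∪ {∞}, +, ·, *, 0, 1)`: infinite sums are
the suprema of the finite partial sums. -/
noncomputable def enatCS : CSOps ℕ∞ where
  add a b := a + b
  mul a b := a * b
  zero := 0
  one := 1
  iSum {ι} f := ⨆ F : Finset ι, ∑ i ∈ F, f i

open Classical in
/-- The complete semiring-semimodule pair `(ℕ^∞, ℕ^∞)`, with the infinite
product making `ℕ^∞` a complete star-omega semiring. -/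
noncomputable def enatCP : CPOps ℕ∞ ℕ∞ where
  vadd a b := a + b
  vzero := 0
  smul a b := a * b
  vSum {ι} f := ⨆ F : Finset ι, ∑ i ∈ F, f i
  iProd s := if ∃ i, s i = 0 then 0 else ⨆ m : ℕ, ∏ i ∈ Finset.range m, s i

/-! ### Auxiliary toolkit for complete semirings -/

namespace CSOps

section Toolkit

variable {S : Type} {R : CSOps S}

theorem IsComplete.add_zero (h : R.IsComplete) (a : S) : R.add a R.zero = a := by
  rw [h.add_comm]; exact h.zero_add a

theorem IsComplete.iSum_congr (_h : R.IsComplete) {ι : Type} {f g : ι → S}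
    (hfg : ∀ i, f i = g i) : R.iSum f = R.iSum g := by
  have : f = g := funext hfg
  rw [this]

theorem IsComplete.iSum_zero (h : R.IsComplete) (ι : Type) :
    R.iSum (fun _ : ι => R.zero) = R.zero := by
  calc R.iSum (fun _ : ι => R.zero)
      = R.iSum (fun _ : ι => R.mul R.zero R.zero) := by
        apply h.iSum_congr; intro i; rw [h.zero_mul]
    _ = R.mul R.zero (R.iSum (fun _ : ι => R.zero)) := (h.mul_iSum _ _).symm
    _ = R.zero := h.zero_mul _

theorem IsComplete.iSum_of_zero (h : R.IsComplete) {ι : Type} {f : ι → S}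
    (hf : ∀ i, f i = R.zero) : R.iSum f = R.zero := by
  have : f = fun _ => R.zero := funext hf
  rw [this]; exact h.iSum_zero ι

theorem IsComplete.iSum_equiv (h : R.IsComplete) {ι κ : Type} (e : ι ≃ κ) (f : ι → S) :
    R.iSum (fun j => f (e.symm j)) = R.iSum f := by
  rw [← h.iSum_partition (g := fun i => e i) f]
  apply h.iSum_congr
  intro j
  have hall : ∀ i : {i : ι // e i = j}, i = (⟨e.symm j, e.apply_symm_apply j⟩ : {i : ι // e i = j}) := by
    intro i
    apply Subtype.ext
    calc i.1 = e.symm (e i.1) := (e.symm_apply_apply _).symm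
      _ = e.symm j := by rw [i.2]
  exact (h.iSum_single (fun i : {i : ι // e i = j} => f i.1)
    (⟨e.symm j, e.apply_symm_apply j⟩ : {i : ι // e i = j}) hall).symm

theorem IsComplete.iSum_equiv' (h : R.IsComplete) {ι κ : Type} (e : ι ≃ κ) (g : κ → S) :
    R.iSum (fun i => g (e i)) = R.iSum g := by
  have := h.iSum_equiv e.symm g
  simpa using this

/-- Equiv between a fiber of `Sigma.fst` and the corresponding component. -/
def sigmaFiberEquiv {κ : Type} (F : κ → Type) (j : κ) : F j ≃ {p : (Σ i, F i) // p.1 = j} where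
  toFun x := ⟨⟨j, x⟩, rfl⟩
  invFun p := cast (congrArg F p.2) p.1.2
  left_inv x := rfl
  right_inv := by rintro ⟨⟨j', x⟩, h⟩; cases h; rfl

theorem IsComplete.iSum_sigma (h : R.IsComplete) {κ : Type} {F : κ → Type}
    (f : (Σ j, F j) → S) :
    R.iSum f = R.iSum (fun j : κ => R.iSum (fun x : F j => f ⟨j, x⟩)) := by
  rw [← h.iSum_partition (g := Sigma.fst) f]
  apply h.iSum_congr; intro j
  exact (h.iSum_equiv' (sigmaFiberEquiv F j) (fun p => f p.1)).symm

theorem IsComplete.iSum_prod (h : R.IsComplete) {ι κ : Type} (f : ι × κ → S) :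
    R.iSum f = R.iSum (fun i => R.iSum (fun j : κ => f (i, j))) := by
  rw [← h.iSum_equiv' (Equiv.sigmaEquivProd ι κ) f, h.iSum_sigma]
  rfl

theorem IsComplete.iSum_comm (h : R.IsComplete) {ι κ : Type} (f : ι → κ → S) :
    R.iSum (fun i => R.iSum (fun j => f i j))
      = R.iSum (fun j : κ => R.iSum (fun i : ι => f i j)) := by
  rw [← h.iSum_prod (fun p : ι × κ => f p.1 p.2),
      ← h.iSum_prod (fun p : κ × ι => f p.2 p.1)]
  have := h.iSum_equiv' (Equiv.prodComm ι κ) (fun p : κ × ι => f p.2 p.1)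
  simpa using this

open Classical in
theorem IsComplete.iSum_split (h : R.IsComplete) {ι : Type} (p : ι → Prop) (f : ι → S) :
    R.iSum f = R.add (R.iSum fun i : {i // p i} => f i.1)
      (R.iSum fun i : {i // ¬ p i} => f i.1) := by
  rw [← h.iSum_partition (g := fun i => decide (p i)) f,
      h.iSum_pair _ true false (by simp) (fun b => by cases b <;> simp)]
  congr 1
  · exact (h.iSum_equiv' (Equiv.subtypeEquivRight (fun i => by simp)) _).symm
  · exact (h.iSum_equiv' (Equiv.subtypeEquivRight (fun i => by simp)) _).symm

open Classical in
theorem IsComplete.iSum_eq_single (h : R.IsComplete) {ι : Type} (f : ι → S) (i₀ : ι)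
    (hz : ∀ i, i ≠ i₀ → f i = R.zero) : R.iSum f = f i₀ := by
  rw [h.iSum_split (fun i => i = i₀) f]
  have h1 : R.iSum (fun i : {i // i = i₀} => f i.1) = f i₀ :=
    h.iSum_single _ (⟨i₀, rfl⟩ : {i // i = i₀}) (fun i => Subtype.ext i.2)
  have h2 : R.iSum (fun i : {i // ¬ i = i₀} => f i.1) = R.zero :=
    h.iSum_of_zero (fun i => hz i.1 i.2)
  rw [h1, h2, h.add_zero]

theorem IsComplete.iSum_eq_pair (h : R.IsComplete) {ι : Type} (f : ι → S) (i₀ i₁ : ι)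
    (hne : i₀ ≠ i₁) (hz : ∀ i, i ≠ i₀ → i ≠ i₁ → f i = R.zero) :
    R.iSum f = R.add (f i₀) (f i₁) := by
  rw [h.iSum_split (fun i => i = i₀) f]
  have h1 : R.iSum (fun i : {i // i = i₀} => f i.1) = f i₀ :=
    h.iSum_single _ (⟨i₀, rfl⟩ : {i // i = i₀}) (fun i => Subtype.ext i.2)
  have h2 : R.iSum (fun i : {i // ¬ i = i₀} => f i.1) = f i₁ :=
    h.iSum_eq_single _ (⟨i₁, fun hh => hne hh.symm⟩ : {i // ¬ i = i₀}) (by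
      rintro ⟨i, hi⟩ hne2
      apply hz i hi
      intro hii
      exact hne2 (Subtype.ext hii))
  rw [h1, h2]

/-- `ℕ ≃ {m // m ≠ 0}`. -/
def natSuccEquiv : ℕ ≃ {m : ℕ // ¬ m = 0} where
  toFun m := ⟨m + 1, Nat.succ_ne_zero m⟩
  invFun m := m.1 - 1
  left_inv m := rfl
  right_inv m := Subtype.ext (Nat.succ_pred_eq_of_pos (Nat.pos_of_ne_zero m.2))

theorem IsComplete.iSum_nat (h : R.IsComplete) (f : ℕ → S) :
    R.iSum f = R.add (f 0) (R.iSum fun m => f (m + 1)) := by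
  rw [h.iSum_split (fun m => m = 0) f]
  congr 1
  · exact h.iSum_single _ (⟨0, rfl⟩ : {m : ℕ // m = 0}) (fun i => Subtype.ext i.2)
  · exact (h.iSum_equiv' natSuccEquiv (fun i => f i.1)).symm

theorem IsComplete.add_eq_iSum (h : R.IsComplete) (a b : S) :
    R.add a b = R.iSum (fun t : Bool => if t then a else b) := by
  rw [h.iSum_pair _ true false (by simp) (fun t => by cases t <;> simp)]
  simp

theorem IsComplete.iSum_add (h : R.IsComplete) {ι : Type} (f g : ι → S) :
    R.iSum (fun i => R.add (f i) (g i)) = R.add (R.iSum f) (R.iSum g) := by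
  calc R.iSum (fun i => R.add (f i) (g i))
      = R.iSum (fun i => R.iSum (fun t : Bool => if t then f i else g i)) := by
        apply h.iSum_congr; intro i; exact h.add_eq_iSum _ _
    _ = R.iSum (fun t : Bool => R.iSum (fun i => if t then f i else g i)) := h.iSum_comm _
    _ = R.add (R.iSum f) (R.iSum g) := by
        rw [h.iSum_pair _ true false (by simp) (fun t => by cases t <;> simp)]
        simp

/-- `ι ≃ {o : Option ι // o ≠ none}`. -/
def optionSomeEquiv (ι : Type) : ι ≃ {o : Option ι // ¬ o = none} where
  toFun i := ⟨some i, by simp⟩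
  invFun o := o.1.get (by cases ho : o.1 with
    | none => exact absurd ho o.2
    | some a => simp [ho])
  left_inv i := rfl
  right_inv := by
    rintro ⟨o, ho⟩
    cases o with
    | none => exact absurd rfl ho
    | some a => rfl

theorem IsComplete.iSum_option (h : R.IsComplete) {ι : Type} (f : Option ι → S) :
    R.iSum f = R.add (f none) (R.iSum fun i => f (some i)) := by
  rw [h.iSum_split (fun o => o = none) f]
  congr 1
  · exact h.iSum_single _ (⟨none, rfl⟩ : {o : Option ι // o = none}) (fun i => Subtype.ext i.2)
  · exact (h.iSum_equiv' (optionSomeEquiv ι) (fun i => f i.1)).symm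

end Toolkit

end CSOps

/-! ### Path expansion of the star of a roc matrix -/

section RocStar

open CSOps

variable {S : Type} (R : CSOps S) {n : ℕ} (M : IMat n S)

/-- Weight of the path `u → l₀ → l₁ → ⋯ → v`. -/
def pw : ℕ × Fin n → ℕ × Fin n → List (ℕ × Fin n) → S
  | u, v, [] => M u.1 v.1 u.2 v.2
  | u, v, w :: l => R.mul (M u.1 w.1 u.2 w.2) (pw w v l)

theorem pw_append (h : R.IsComplete) (u v w : ℕ × Fin n) (l₁ l₂ : List (ℕ × Fin n)) :
    pw R M u v (l₁ ++ w :: l₂) = R.mul (pw R M u w l₁) (pw R M w v l₂) := by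
  induction l₁ generalizing u with
  | nil => rfl
  | cons x l₁ ih =>
    show R.mul (M u.1 x.1 u.2 x.2) (pw R M x v (l₁ ++ w :: l₂)) = _
    rw [ih x, ← h.mul_assoc]
    rfl

theorem M_zero_row (hroc : IsRoc R M) (j : ℕ) : M 0 j = bZero R := hroc.2 0 j (Or.inl rfl)

theorem M_no (hroc : IsRoc R M) {i j : ℕ} (h1 : j ≠ i + 1) (h2 : j ≠ i) (h3 : j + 1 ≠ i) :
    M i j = bZero R := hroc.2 i j (Or.inr ⟨h1, h2, h3⟩)

theorem M_shift (hroc : IsRoc R M) (a b : ℕ) (ha : 1 ≤ a) : M (a + 1) (b + 1) = M a b := by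
  obtain ⟨hr, hz⟩ := hroc
  by_cases h1 : b = a + 1
  · subst h1; rw [(hr (a + 1) (by omega)).1, (hr a ha).1]
  by_cases h2 : b = a
  · rw [h2, (hr (a + 1) (by omega)).2.1, (hr a ha).2.1]
  by_cases h3 : b + 1 = a
  · have e1 := (hr (a + 1) (by omega)).2.2
    have e2 := (hr a ha).2.2
    simp only [Nat.add_sub_cancel] at e1
    have hb : b = a - 1 := by omega
    rw [h3, e1, hb, e2]
  · rw [hz (a + 1) (b + 1) (Or.inr ⟨by omega, by omega, by omega⟩),
        hz a b (Or.inr ⟨by omega, by omega, by omega⟩)]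

theorem pw_from_zero (h : R.IsComplete) (hroc : IsRoc R M) (c : Fin n) (v : ℕ × Fin n)
    (l : List (ℕ × Fin n)) : pw R M (0, c) v l = R.zero := by
  cases l with
  | nil =>
    show M 0 v.1 c v.2 = R.zero
    rw [M_zero_row R M hroc v.1]; rfl
  | cons w l =>
    show R.mul (M 0 w.1 c w.2) (pw R M w v l) = R.zero
    rw [M_zero_row R M hroc w.1]
    exact h.zero_mul _

theorem pw_mem_zero (h : R.IsComplete) (hroc : IsRoc R M) (u e : ℕ × Fin n)
    {l : List (ℕ × Fin n)} {v : ℕ × Fin n} (hv : v ∈ l) (hv0 : v.1 = 0) :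
    pw R M u e l = R.zero := by
  obtain ⟨s, t, rfl⟩ := List.append_of_mem hv
  rw [pw_append R M h u e v s t]
  obtain ⟨v1, v2⟩ := v
  simp only at hv0
  subst hv0
  rw [pw_from_zero R M h hroc v2 e t]
  exact h.mul_zero _

theorem pw_high (h : R.IsComplete) (hroc : IsRoc R M) (b : Fin n) :
    ∀ (l : List (ℕ × Fin n)) (u : ℕ × Fin n), 2 ≤ u.1 → (∀ v ∈ l, 2 ≤ v.1) →
      pw R M u (0, b) l = R.zero := by
  intro l
  induction l with
  | nil =>
    intro u hu _
    show M u.1 0 u.2 b = R.zero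
    rw [M_no R M hroc (by omega) (by omega) (by omega)]; rfl
  | cons w l ih =>
    intro u hu hl
    show R.mul (M u.1 w.1 u.2 w.2) (pw R M w (0, b) l) = R.zero
    rw [ih w (hl w (by simp)) (fun v hv => hl v (by simp [hv]))]
    exact h.mul_zero _

theorem pw_shift (hroc : IsRoc R M) :
    ∀ (l : List (ℕ × Fin n)) (u e : ℕ × Fin n), 1 ≤ u.1 → (∀ v ∈ l, 1 ≤ v.1) →
      pw R M (u.1 + 1, u.2) (e.1 + 1, e.2) (l.map (fun v => (v.1 + 1, v.2))) = pw R M u e l := by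
  intro l
  induction l with
  | nil =>
    intro u e hu _
    show M (u.1 + 1) (e.1 + 1) u.2 e.2 = M u.1 e.1 u.2 e.2
    rw [M_shift R M hroc u.1 e.1 hu]
  | cons w l ih =>
    intro u e hu hl
    show R.mul (M (u.1 + 1) (w.1 + 1) u.2 w.2) _ = R.mul (M u.1 w.1 u.2 w.2) (pw R M w e l)
    rw [M_shift R M hroc u.1 w.1 hu, ih w e (hl w (by simp)) (fun v hv => hl v (by simp [hv]))]

/-- Prepending a step to a path of fixed length. -/
def consEquiv (n m : ℕ) :
    (ℕ × (Fin n × {l : List (ℕ × Fin n) // l.length = m})) ≃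
      {l : List (ℕ × Fin n) // l.length = m + 1} where
  toFun p := ⟨(p.1, p.2.1) :: p.2.2.1, by simp [p.2.2.2]⟩
  invFun p := match p with
    | ⟨[], hp⟩ => absurd hp (by simp)
    | ⟨x :: t, hp⟩ => (x.1, x.2, ⟨t, by simpa using hp⟩)
  left_inv p := rfl
  right_inv := by
    rintro ⟨l, hl⟩
    cases l with
    | nil => simp at hl
    | cons x t => rfl

theorem pow_expand (h : R.IsComplete) : ∀ (m : ℕ) (i j : ℕ) (a b : Fin n),
    iMatPow R M (m + 1) i j a b =
      R.iSum (fun l : {l : List (ℕ × Fin n) // l.length = m} => pw R M (i, a) (j, b) l.1) := by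
  intro m
  induction m with
  | zero =>
    intro i j a b
    have hrhs : R.iSum (fun l : {l : List (ℕ × Fin n) // l.length = 0} =>
        pw R M (i, a) (j, b) l.1) = M i j a b :=
      h.iSum_single _ (⟨[], rfl⟩ : {l : List (ℕ × Fin n) // l.length = 0})
        (fun l => Subtype.ext (List.eq_nil_of_length_eq_zero l.2))
    rw [hrhs]
    show R.iSum (fun l0 : ℕ => R.iSum (fun c : Fin n =>
        R.mul (M i l0 a c) (iMatOne R l0 j c b))) = M i j a b
    rw [h.iSum_eq_single _ j (fun l0 hl0 => by
      apply h.iSum_of_zero; intro c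
      have e : iMatOne R l0 j c b = R.zero := by simp [iMatOne, hl0, bZero]
      rw [e]; exact h.mul_zero _)]
    rw [h.iSum_eq_single _ b (fun c hcb => by
      have e : iMatOne R j j c b = R.zero := by simp [iMatOne, bOne, hcb]
      rw [e]; exact h.mul_zero _)]
    have e : iMatOne R j j b b = R.one := by simp [iMatOne, bOne]
    rw [e, h.mul_one]
  | succ m ih =>
    intro i j a b
    show R.iSum (fun l0 : ℕ => R.iSum (fun c : Fin n =>
        R.mul (M i l0 a c) (iMatPow R M (m + 1) l0 j c b))) = _
    calc R.iSum (fun l0 : ℕ => R.iSum (fun c : Fin n =>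
            R.mul (M i l0 a c) (iMatPow R M (m + 1) l0 j c b)))
        = R.iSum (fun l0 : ℕ => R.iSum (fun c : Fin n =>
            R.iSum (fun l : {l : List (ℕ × Fin n) // l.length = m} =>
              R.mul (M i l0 a c) (pw R M (l0, c) (j, b) l.1)))) := by
          apply h.iSum_congr; intro l0
          apply h.iSum_congr; intro c
          rw [ih l0 j c b, h.mul_iSum]
      _ = R.iSum (fun l0 : ℕ =>
            R.iSum (fun q : Fin n × {l : List (ℕ × Fin n) // l.length = m} =>
              R.mul (M i l0 a q.1) (pw R M (l0, q.1) (j, b) q.2.1))) := by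
          apply h.iSum_congr; intro l0
          exact (h.iSum_prod (fun q : Fin n × {l : List (ℕ × Fin n) // l.length = m} =>
            R.mul (M i l0 a q.1) (pw R M (l0, q.1) (j, b) q.2.1))).symm
      _ = R.iSum (fun p : ℕ × (Fin n × {l : List (ℕ × Fin n) // l.length = m}) =>
            R.mul (M i p.1 a p.2.1) (pw R M (p.1, p.2.1) (j, b) p.2.2.1)) :=
          (h.iSum_prod (fun p : ℕ × (Fin n × {l : List (ℕ × Fin n) // l.length = m}) =>
            R.mul (M i p.1 a p.2.1) (pw R M (p.1, p.2.1) (j, b) p.2.2.1))).symm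
      _ = R.iSum (fun l : {l : List (ℕ × Fin n) // l.length = m + 1} =>
            pw R M (i, a) (j, b) l.1) :=
          h.iSum_equiv' (consEquiv n m) (fun l => pw R M (i, a) (j, b) l.1)

theorem star_expand (h : R.IsComplete) (i j : ℕ) (hij : i ≠ j) (a b : Fin n) :
    iStar R M i j a b = R.iSum (fun l : List (ℕ × Fin n) => pw R M (i, a) (j, b) l) := by
  show R.iSum (fun m => iMatPow R M m i j a b) = _
  rw [h.iSum_nat]
  have h0 : iMatPow R M 0 i j a b = R.zero := by
    simp [iMatPow, iMatOne, hij, bZero]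
  rw [h0, h.zero_add]
  calc R.iSum (fun m => iMatPow R M (m + 1) i j a b)
      = R.iSum (fun m => R.iSum (fun l : {l : List (ℕ × Fin n) // l.length = m} =>
          pw R M (i, a) (j, b) l.1)) := by
        apply h.iSum_congr; intro m; exact pow_expand R M h m i j a b
    _ = R.iSum (fun l : List (ℕ × Fin n) => pw R M (i, a) (j, b) l) :=
        h.iSum_partition (g := List.length) _

/-! ### Splitting a path from level 2 at the first visit of a level `≤ 1` -/

/-- Splits a list at the first entry with level `≤ 1`. -/
def split2 {n : ℕ} : List (ℕ × Fin n) → Option (List (ℕ × Fin n) × (ℕ × Fin n) × List (ℕ × Fin n))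
  | [] => none
  | v :: l =>
    if v.1 ≤ 1 then some ([], v, l)
    else match split2 l with
      | none => none
      | some (l₁, w, l₂) => some (v :: l₁, w, l₂)

theorem split2_none {n : ℕ} : ∀ {l : List (ℕ × Fin n)}, split2 l = none → ∀ v ∈ l, 2 ≤ v.1 := by
  intro l
  induction l with
  | nil => intro _ v hv; simp at hv
  | cons x t ih =>
    intro hl v hv
    by_cases hx : x.1 ≤ 1
    · simp [split2, hx] at hl
    · rcases List.mem_cons.mp hv with rfl | hv'
      · omega
      · apply ih ?_ v hv'
        revert hl
        simp only [split2, if_neg hx]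
        cases hs : split2 t with
        | none => intro _; rfl
        | some p =>
          obtain ⟨l₁, w, l₂⟩ := p
          intro hh; simp at hh

theorem split2_some {n : ℕ} : ∀ {l l₁ : List (ℕ × Fin n)} {w : ℕ × Fin n} {l₂ : List (ℕ × Fin n)},
    split2 l = some (l₁, w, l₂) →
    l = l₁ ++ w :: l₂ ∧ (∀ v ∈ l₁, 2 ≤ v.1) ∧ w.1 ≤ 1 := by
  intro l
  induction l with
  | nil => intro l₁ w l₂ hl; simp [split2] at hl
  | cons x t ih =>
    intro l₁ w l₂ hl
    by_cases hx : x.1 ≤ 1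
    · simp only [split2, if_pos hx, Option.some.injEq, Prod.mk.injEq] at hl
      obtain ⟨h1, h2, h3⟩ := hl
      subst h1; subst h2; subst h3
      exact ⟨rfl, by simp, hx⟩
    · simp only [split2, if_neg hx] at hl
      cases hs : split2 t with
      | none => rw [hs] at hl; simp at hl
      | some p =>
        obtain ⟨m₁, w', m₂⟩ := p
        rw [hs] at hl
        simp only [Option.some.injEq, Prod.mk.injEq] at hl
        obtain ⟨h1, h2, h3⟩ := hl
        subst h1; subst h2; subst h3
        obtain ⟨ht, hm, hw⟩ := ih hs
        refine ⟨by rw [ht]; simp, ?_, hw⟩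
        intro v hv
        rcases List.mem_cons.mp hv with rfl | hv'
        · omega
        · exact hm v hv'

theorem split2_build {n : ℕ} : ∀ (l₁ : List (ℕ × Fin n)) (w : ℕ × Fin n) (l₂ : List (ℕ × Fin n)),
    (∀ v ∈ l₁, 2 ≤ v.1) → w.1 ≤ 1 → split2 (l₁ ++ w :: l₂) = some (l₁, w, l₂) := by
  intro l₁
  induction l₁ with
  | nil => intro w l₂ _ hw; simp [split2, hw]
  | cons x t ih =>
    intro w l₂ hall hw
    have hx : ¬ x.1 ≤ 1 := by have := hall x (by simp); omega
    show split2 (x :: (t ++ w :: l₂)) = _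
    simp only [split2, if_neg hx, ih w l₂ (fun v hv => hall v (by simp [hv])) hw]

/-- Reordering of the components of the splitting data. -/
def rot3 (α β γ : Type) : (α × β × γ) ≃ (β × α × γ) where
  toFun p := (p.2.1, p.1, p.2.2)
  invFun p := (p.2.1, p.1, p.2.2)
  left_inv p := rfl
  right_inv p := rfl

/-- Prepending a step (for nonempty lists). -/
def consNeEquiv (α : Type) : (α × List α) ≃ {l : List α // ¬ l = []} where
  toFun p := ⟨p.1 :: p.2, by simp⟩
  invFun p := match p with
    | ⟨[], hp⟩ => absurd rfl hp
    | ⟨x :: t, _⟩ => (x, t)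
  left_inv p := rfl
  right_inv := by
    rintro ⟨l, hl⟩
    cases l with
    | nil => exact absurd rfl hl
    | cons x t => rfl

theorem map_up_down {n : ℕ} : ∀ (l : List (ℕ × Fin n)), (∀ v ∈ l, 1 ≤ v.1) →
    l.map (fun v => (v.1 - 1 + 1, v.2)) = l := by
  intro l
  induction l with
  | nil => intro _; rfl
  | cons x t ih =>
    intro hl
    simp only [List.map_cons]
    rw [ih (fun v hv => hl v (by simp [hv]))]
    have hx : x.1 - 1 + 1 = x.1 := by have := hl x (by simp); omega
    rw [hx]

/-- Shifting all levels of a path up by one. -/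
def upEquiv (n : ℕ) : {l : List (ℕ × Fin n) // ∀ v ∈ l, 1 ≤ v.1} ≃
    {l : List (ℕ × Fin n) // ∀ v ∈ l, 2 ≤ v.1} where
  toFun l := ⟨l.1.map (fun v => (v.1 + 1, v.2)), by
    intro v hv
    obtain ⟨u, hu, rfl⟩ := List.mem_map.mp hv
    have := l.2 u hu; omega⟩
  invFun l := ⟨l.1.map (fun v => (v.1 - 1, v.2)), by
    intro v hv
    obtain ⟨u, hu, rfl⟩ := List.mem_map.mp hv
    have := l.2 u hu; simp; omega⟩
  left_inv := by
    rintro ⟨l, hl⟩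
    apply Subtype.ext
    simp only [List.map_map]
    have : ((fun v : ℕ × Fin n => (v.1 - 1, v.2)) ∘ (fun v : ℕ × Fin n => (v.1 + 1, v.2)))
        = id := by funext v; simp
    rw [this, List.map_id]
  right_inv := by
    rintro ⟨l, hl⟩
    apply Subtype.ext
    simp only [List.map_map]
    have : l.map ((fun v : ℕ × Fin n => (v.1 + 1, v.2)) ∘ (fun v : ℕ × Fin n => (v.1 - 1, v.2)))
        = l.map (fun v => (v.1 - 1 + 1, v.2)) := rfl
    rw [this]
    exact map_up_down l (fun v hv => by have := hl v hv; omega)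

theorem sum_up_paths (h : R.IsComplete) (hroc : IsRoc R M) (c d : Fin n) :
    R.iSum (fun l : {l : List (ℕ × Fin n) // ∀ v ∈ l, 2 ≤ v.1} => pw R M (2, c) (1, d) l.1)
      = R.iSum (fun l : List (ℕ × Fin n) => pw R M (1, c) (0, d) l) := by
  calc R.iSum (fun l : {l : List (ℕ × Fin n) // ∀ v ∈ l, 2 ≤ v.1} => pw R M (2, c) (1, d) l.1)
      = R.iSum (fun l : {l : List (ℕ × Fin n) // ∀ v ∈ l, 1 ≤ v.1} =>
          pw R M (2, c) (1, d) (l.1.map (fun v => (v.1 + 1, v.2)))) :=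
        (h.iSum_equiv' (upEquiv n) (fun l => pw R M (2, c) (1, d) l.1)).symm
    _ = R.iSum (fun l : {l : List (ℕ × Fin n) // ∀ v ∈ l, 1 ≤ v.1} =>
          pw R M (1, c) (0, d) l.1) := by
        apply h.iSum_congr; intro l
        exact pw_shift R M hroc l.1 (1, c) (0, d) (by omega) l.2
    _ = R.iSum (fun l : List (ℕ × Fin n) => pw R M (1, c) (0, d) l) := by
        rw [h.iSum_split (fun l : List (ℕ × Fin n) => ∀ v ∈ l, 1 ≤ v.1)
          (fun l => pw R M (1, c) (0, d) l)]
        have hz : R.iSum (fun l : {l : List (ℕ × Fin n) // ¬ ∀ v ∈ l, 1 ≤ v.1} =>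
            pw R M (1, c) (0, d) l.1) = R.zero := by
          apply h.iSum_of_zero
          rintro ⟨l, hl⟩
          push_neg at hl
          obtain ⟨v, hv, hv1⟩ := hl
          exact pw_mem_zero R M h hroc (1, c) (0, d) hv (by omega)
        rw [hz, h.add_zero]

open Classical in
theorem yL_eq (h : R.IsComplete) (hroc : IsRoc R M) (c b : Fin n) :
    R.iSum (fun l : List (ℕ × Fin n) => pw R M (2, c) (0, b) l)
      = R.iSum (fun d : Fin n =>
          R.mul (R.iSum (fun l : List (ℕ × Fin n) => pw R M (1, c) (0, d) l))
                (R.iSum (fun l : List (ℕ × Fin n) => pw R M (1, d) (0, b) l))) := by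
  rw [← h.iSum_partition (g := split2) (fun l => pw R M (2, c) (0, b) l), h.iSum_option]
  have hnone : R.iSum (fun l : {l // split2 l = none} => pw R M (2, c) (0, b) l.1) = R.zero :=
    h.iSum_of_zero (fun l => pw_high R M h hroc b l.1 (2, c) (by omega) (split2_none l.2))
  rw [hnone, h.zero_add]
  have hfib : ∀ t : List (ℕ × Fin n) × (ℕ × Fin n) × List (ℕ × Fin n),
      R.iSum (fun l : {l // split2 l = some t} => pw R M (2, c) (0, b) l.1)
        = if (∀ v ∈ t.1, 2 ≤ v.1) ∧ t.2.1.1 ≤ 1 then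
            pw R M (2, c) (0, b) (t.1 ++ t.2.1 :: t.2.2) else R.zero := by
    rintro ⟨l₁, w, l₂⟩
    by_cases hv : (∀ v ∈ l₁, 2 ≤ v.1) ∧ w.1 ≤ 1
    · rw [if_pos hv]
      exact h.iSum_single _
        (⟨l₁ ++ w :: l₂, split2_build l₁ w l₂ hv.1 hv.2⟩ : {l // split2 l = some (l₁, w, l₂)})
        (fun l => Subtype.ext (split2_some l.2).1)
    · rw [if_neg hv]
      exact h.iSum_empty _ ⟨fun l => hv ⟨(split2_some l.2).2.1, (split2_some l.2).2.2⟩⟩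
  calc R.iSum (fun t : List (ℕ × Fin n) × (ℕ × Fin n) × List (ℕ × Fin n) =>
          R.iSum (fun l : {l // split2 l = some t} => pw R M (2, c) (0, b) l.1))
      = R.iSum (fun t : List (ℕ × Fin n) × (ℕ × Fin n) × List (ℕ × Fin n) =>
          if (∀ v ∈ t.1, 2 ≤ v.1) ∧ t.2.1.1 ≤ 1 then
            pw R M (2, c) (0, b) (t.1 ++ t.2.1 :: t.2.2) else R.zero) := h.iSum_congr hfib
    _ = R.iSum (fun t : (ℕ × Fin n) × List (ℕ × Fin n) × List (ℕ × Fin n) =>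
          if (∀ v ∈ t.2.1, 2 ≤ v.1) ∧ t.1.1 ≤ 1 then
            pw R M (2, c) (0, b) (t.2.1 ++ t.1 :: t.2.2) else R.zero) :=
        h.iSum_equiv' (rot3 _ _ _)
          (fun t : (ℕ × Fin n) × List (ℕ × Fin n) × List (ℕ × Fin n) =>
            if (∀ v ∈ t.2.1, 2 ≤ v.1) ∧ t.1.1 ≤ 1 then
              pw R M (2, c) (0, b) (t.2.1 ++ t.1 :: t.2.2) else R.zero)
    _ = R.iSum (fun w : ℕ × Fin n => R.iSum (fun p : List (ℕ × Fin n) × List (ℕ × Fin n) =>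
          if (∀ v ∈ p.1, 2 ≤ v.1) ∧ w.1 ≤ 1 then
            pw R M (2, c) (0, b) (p.1 ++ w :: p.2) else R.zero)) := h.iSum_prod _
    _ = R.iSum (fun lw : ℕ => R.iSum (fun d : Fin n =>
          R.iSum (fun p : List (ℕ × Fin n) × List (ℕ × Fin n) =>
            if (∀ v ∈ p.1, 2 ≤ v.1) ∧ lw ≤ 1 then
              pw R M (2, c) (0, b) (p.1 ++ (lw, d) :: p.2) else R.zero))) := h.iSum_prod _
    _ = R.iSum (fun d : Fin n =>
          R.iSum (fun p : List (ℕ × Fin n) × List (ℕ × Fin n) =>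
            if (∀ v ∈ p.1, 2 ≤ v.1) then
              pw R M (2, c) (0, b) (p.1 ++ (1, d) :: p.2) else R.zero)) := by
        rw [h.iSum_eq_single _ 1 ?hz]
        case hz =>
          intro lw hlw
          apply h.iSum_of_zero; intro d
          apply h.iSum_of_zero; intro p
          by_cases hcond : (∀ v ∈ p.1, 2 ≤ v.1) ∧ lw ≤ 1
          · rw [if_pos hcond]
            have hlw0 : lw = 0 := by omega
            subst hlw0
            exact pw_mem_zero R M h hroc (2, c) (0, b)
              (show ((0 : ℕ), d) ∈ p.1 ++ (0, d) :: p.2 by simp) rfl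
          · rw [if_neg hcond]
        apply h.iSum_congr; intro d
        apply h.iSum_congr; intro p
        by_cases hcond : ∀ v ∈ p.1, 2 ≤ v.1
        · rw [if_pos ⟨hcond, by omega⟩, if_pos hcond]
        · rw [if_neg (fun hc => hcond hc.1), if_neg hcond]
    _ = R.iSum (fun d : Fin n =>
          R.mul (R.iSum (fun l : List (ℕ × Fin n) => pw R M (1, c) (0, d) l))
                (R.iSum (fun l : List (ℕ × Fin n) => pw R M (1, d) (0, b) l))) := by
        apply h.iSum_congr; intro d
        calc R.iSum (fun p : List (ℕ × Fin n) × List (ℕ × Fin n) =>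
                if (∀ v ∈ p.1, 2 ≤ v.1) then
                  pw R M (2, c) (0, b) (p.1 ++ (1, d) :: p.2) else R.zero)
            = R.iSum (fun l₁ : List (ℕ × Fin n) => R.iSum (fun l₂ : List (ℕ × Fin n) =>
                if (∀ v ∈ l₁, 2 ≤ v.1) then
                  pw R M (2, c) (0, b) (l₁ ++ (1, d) :: l₂) else R.zero)) := h.iSum_prod _
          _ = R.iSum (fun l₁ : List (ℕ × Fin n) =>
                if (∀ v ∈ l₁, 2 ≤ v.1) then
                  R.mul (pw R M (2, c) (1, d) l₁)
                    (R.iSum (fun l₂ : List (ℕ × Fin n) => pw R M (1, d) (0, b) l₂))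
                else R.zero) := by
              apply h.iSum_congr; intro l₁
              by_cases hcond : ∀ v ∈ l₁, 2 ≤ v.1
              · rw [if_pos hcond, h.mul_iSum]
                apply h.iSum_congr; intro l₂
                rw [if_pos hcond, pw_append R M h (2, c) (0, b) (1, d) l₁ l₂]
              · rw [if_neg hcond]
                apply h.iSum_of_zero; intro l₂
                rw [if_neg hcond]
          _ = R.mul (R.iSum (fun l : List (ℕ × Fin n) => pw R M (1, c) (0, d) l))
                (R.iSum (fun l : List (ℕ × Fin n) => pw R M (1, d) (0, b) l)) := by
              rw [h.iSum_split (fun l₁ : List (ℕ × Fin n) => ∀ v ∈ l₁, 2 ≤ v.1)]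
              have hyes : R.iSum (fun l₁ : {l₁ : List (ℕ × Fin n) // ∀ v ∈ l₁, 2 ≤ v.1} =>
                  if (∀ v ∈ l₁.1, 2 ≤ v.1) then
                    R.mul (pw R M (2, c) (1, d) l₁.1)
                      (R.iSum (fun l₂ : List (ℕ × Fin n) => pw R M (1, d) (0, b) l₂))
                  else R.zero)
                  = R.mul (R.iSum (fun l : List (ℕ × Fin n) => pw R M (1, c) (0, d) l))
                      (R.iSum (fun l : List (ℕ × Fin n) => pw R M (1, d) (0, b) l)) := by
                calc R.iSum (fun l₁ : {l₁ : List (ℕ × Fin n) // ∀ v ∈ l₁, 2 ≤ v.1} =>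
                        if (∀ v ∈ l₁.1, 2 ≤ v.1) then
                          R.mul (pw R M (2, c) (1, d) l₁.1)
                            (R.iSum (fun l₂ : List (ℕ × Fin n) => pw R M (1, d) (0, b) l₂))
                        else R.zero)
                    = R.iSum (fun l₁ : {l₁ : List (ℕ × Fin n) // ∀ v ∈ l₁, 2 ≤ v.1} =>
                        R.mul (pw R M (2, c) (1, d) l₁.1)
                          (R.iSum (fun l₂ : List (ℕ × Fin n) => pw R M (1, d) (0, b) l₂))) := by
                      apply h.iSum_congr; intro l₁; rw [if_pos l₁.2]
                  _ = R.mul (R.iSum (fun l₁ : {l₁ : List (ℕ × Fin n) // ∀ v ∈ l₁, 2 ≤ v.1} =>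
                        pw R M (2, c) (1, d) l₁.1))
                        (R.iSum (fun l₂ : List (ℕ × Fin n) => pw R M (1, d) (0, b) l₂)) :=
                      (h.iSum_mul _ _).symm
                  _ = _ := by rw [sum_up_paths R M h hroc c d]
              have hno : R.iSum (fun l₁ : {l₁ : List (ℕ × Fin n) // ¬ ∀ v ∈ l₁, 2 ≤ v.1} =>
                  if (∀ v ∈ l₁.1, 2 ≤ v.1) then
                    R.mul (pw R M (2, c) (1, d) l₁.1)
                      (R.iSum (fun l₂ : List (ℕ × Fin n) => pw R M (1, d) (0, b) l₂))
                  else R.zero) = R.zero := by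
                apply h.iSum_of_zero; intro l₁; rw [if_neg l₁.2]
              rw [hyes, hno, h.add_zero]

open Classical in
theorem xL_eq (h : R.IsComplete) (hroc : IsRoc R M) (a b : Fin n) :
    R.iSum (fun l : List (ℕ × Fin n) => pw R M (1, a) (0, b) l)
      = R.add (M 1 0 a b) (R.add
          (R.iSum (fun cc : Fin n => R.mul (M 1 1 a cc)
            (R.iSum (fun l : List (ℕ × Fin n) => pw R M (1, cc) (0, b) l))))
          (R.iSum (fun cc : Fin n => R.mul (M 1 2 a cc)
            (R.iSum (fun l : List (ℕ × Fin n) => pw R M (2, cc) (0, b) l))))) := by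
  rw [h.iSum_split (fun l : List (ℕ × Fin n) => l = []) (fun l => pw R M (1, a) (0, b) l)]
  have h1 : R.iSum (fun l : {l : List (ℕ × Fin n) // l = []} => pw R M (1, a) (0, b) l.1)
      = M 1 0 a b :=
    h.iSum_single _ (⟨[], rfl⟩ : {l : List (ℕ × Fin n) // l = []}) (fun l => Subtype.ext l.2)
  rw [h1]
  congr 1
  calc R.iSum (fun l : {l : List (ℕ × Fin n) // ¬ l = []} => pw R M (1, a) (0, b) l.1)
      = R.iSum (fun p : (ℕ × Fin n) × List (ℕ × Fin n) =>
          pw R M (1, a) (0, b) (p.1 :: p.2)) :=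
        (h.iSum_equiv' (consNeEquiv _) (fun l => pw R M (1, a) (0, b) l.1)).symm
    _ = R.iSum (fun v : ℕ × Fin n => R.iSum (fun t : List (ℕ × Fin n) =>
          R.mul (M 1 v.1 a v.2) (pw R M v (0, b) t))) := h.iSum_prod _
    _ = R.iSum (fun v : ℕ × Fin n =>
          R.mul (M 1 v.1 a v.2) (R.iSum (fun t : List (ℕ × Fin n) => pw R M v (0, b) t))) := by
        apply h.iSum_congr; intro v
        exact (h.mul_iSum _ _).symm
    _ = R.iSum (fun lv : ℕ => R.iSum (fun cc : Fin n =>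
          R.mul (M 1 lv a cc)
            (R.iSum (fun t : List (ℕ × Fin n) => pw R M (lv, cc) (0, b) t)))) := h.iSum_prod _
    _ = _ := by
        rw [h.iSum_eq_pair _ 1 2 (by omega) ?hz]
        case hz =>
          intro lv h1' h2'
          apply h.iSum_of_zero; intro cc
          by_cases hlv : lv = 0
          · subst hlv
            have hin : R.iSum (fun t : List (ℕ × Fin n) => pw R M (0, cc) (0, b) t) = R.zero :=
              h.iSum_of_zero (fun t => pw_from_zero R M h hroc cc (0, b) t)
            rw [hin]; exact h.mul_zero _
          · have hM : M 1 lv = bZero R := M_no R M hroc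
              (by omega) (by omega) (by omega)
            rw [hM]
            exact h.zero_mul _

end RocStar

/-! ### Completeness of the semiring of power series over finite words -/

section FinOpsComplete

open CSOps

variable {S : Type} {R : CSOps S} {A : Type}

/-- Regrouping of a double splitting, left-nested version. -/
def assocEquivL (w : List A) :
    (Σ p : {p : List A × List A // p.1 ++ p.2 = w},
        {q : List A × List A // q.1 ++ q.2 = p.1.1}) ≃
      {r : List A × List A × List A // r.1 ++ r.2.1 ++ r.2.2 = w} where
  toFun x := ⟨(x.2.1.1, x.2.1.2, x.1.1.2), by
    dsimp only; rw [x.2.2]; exact x.1.2⟩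
  invFun r := ⟨⟨(r.1.1 ++ r.1.2.1, r.1.2.2), r.2⟩,
    ⟨(r.1.1, r.1.2.1), rfl⟩⟩
  left_inv := by
    rintro ⟨⟨⟨p1, p2⟩, hp⟩, ⟨⟨q1, q2⟩, hq⟩⟩
    simp only at hq
    subst hq; subst hp; rfl
  right_inv := by
    rintro ⟨⟨r1, r2, r3⟩, hr⟩
    subst hr; rfl

/-- Regrouping of a double splitting, right-nested version. -/
def assocEquivR (w : List A) :
    (Σ p : {p : List A × List A // p.1 ++ p.2 = w},
        {q : List A × List A // q.1 ++ q.2 = p.1.2}) ≃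
      {r : List A × List A × List A // r.1 ++ r.2.1 ++ r.2.2 = w} where
  toFun x := ⟨(x.1.1.1, x.2.1.1, x.2.1.2), by
    dsimp only; rw [List.append_assoc, x.2.2]; exact x.1.2⟩
  invFun r := ⟨⟨(r.1.1, r.1.2.1 ++ r.1.2.2), by
    dsimp only; rw [← List.append_assoc]; exact r.2⟩, ⟨(r.1.2.1, r.1.2.2), rfl⟩⟩
  left_inv := by
    rintro ⟨⟨⟨p1, p2⟩, hp⟩, ⟨⟨q1, q2⟩, hq⟩⟩
    simp only at hq
    subst hq; subst hp; rfl
  right_inv := by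
    rintro ⟨⟨r1, r2, r3⟩, hr⟩
    subst hr; rfl

theorem finOps_isComplete (h : R.IsComplete) : (finOps R A).IsComplete := by
  constructor
  case add_assoc => intro a b c; funext w; exact h.add_assoc _ _ _
  case add_comm => intro a b; funext w; exact h.add_comm _ _
  case zero_add => intro a; funext w; exact h.zero_add _
  case mul_assoc =>
    intro s t u
    funext w
    show R.iSum (fun p : {p : List A × List A // p.1 ++ p.2 = w} =>
        R.mul (R.iSum (fun q : {q : List A × List A // q.1 ++ q.2 = p.1.1} =>
          R.mul (s q.1.1) (t q.1.2))) (u p.1.2))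
      = R.iSum (fun p : {p : List A × List A // p.1 ++ p.2 = w} =>
        R.mul (s p.1.1) (R.iSum (fun q : {q : List A × List A // q.1 ++ q.2 = p.1.2} =>
          R.mul (t q.1.1) (u q.1.2))))
    calc R.iSum (fun p : {p : List A × List A // p.1 ++ p.2 = w} =>
            R.mul (R.iSum (fun q : {q : List A × List A // q.1 ++ q.2 = p.1.1} =>
              R.mul (s q.1.1) (t q.1.2))) (u p.1.2))
        = R.iSum (fun p : {p : List A × List A // p.1 ++ p.2 = w} =>
            R.iSum (fun q : {q : List A × List A // q.1 ++ q.2 = p.1.1} =>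
              R.mul (R.mul (s q.1.1) (t q.1.2)) (u p.1.2))) := by
          apply h.iSum_congr; intro p; rw [h.iSum_mul]
      _ = R.iSum (fun x : (Σ p : {p : List A × List A // p.1 ++ p.2 = w},
            {q : List A × List A // q.1 ++ q.2 = p.1.1}) =>
            R.mul (R.mul (s x.2.1.1) (t x.2.1.2)) (u x.1.1.2)) :=
          (h.iSum_sigma (fun x : (Σ p : {p : List A × List A // p.1 ++ p.2 = w},
            {q : List A × List A // q.1 ++ q.2 = p.1.1}) =>
            R.mul (R.mul (s x.2.1.1) (t x.2.1.2)) (u x.1.1.2))).symm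
      _ = R.iSum (fun r : {r : List A × List A × List A // r.1 ++ r.2.1 ++ r.2.2 = w} =>
            R.mul (R.mul (s r.1.1) (t r.1.2.1)) (u r.1.2.2)) :=
          h.iSum_equiv' (assocEquivL w)
            (fun r => R.mul (R.mul (s r.1.1) (t r.1.2.1)) (u r.1.2.2))
      _ = R.iSum (fun r : {r : List A × List A × List A // r.1 ++ r.2.1 ++ r.2.2 = w} =>
            R.mul (s r.1.1) (R.mul (t r.1.2.1) (u r.1.2.2))) := by
          apply h.iSum_congr; intro r; exact h.mul_assoc _ _ _
      _ = R.iSum (fun x : (Σ p : {p : List A × List A // p.1 ++ p.2 = w},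
            {q : List A × List A // q.1 ++ q.2 = p.1.2}) =>
            R.mul (s x.1.1.1) (R.mul (t x.2.1.1) (u x.2.1.2))) :=
          (h.iSum_equiv' (assocEquivR w)
            (fun r => R.mul (s r.1.1) (R.mul (t r.1.2.1) (u r.1.2.2)))).symm
      _ = R.iSum (fun p : {p : List A × List A // p.1 ++ p.2 = w} =>
            R.iSum (fun q : {q : List A × List A // q.1 ++ q.2 = p.1.2} =>
              R.mul (s p.1.1) (R.mul (t q.1.1) (u q.1.2)))) :=
          h.iSum_sigma _
      _ = R.iSum (fun p : {p : List A × List A // p.1 ++ p.2 = w} =>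
            R.mul (s p.1.1) (R.iSum (fun q : {q : List A × List A // q.1 ++ q.2 = p.1.2} =>
              R.mul (t q.1.1) (u q.1.2)))) := by
          apply h.iSum_congr; intro p; rw [h.mul_iSum]
  case one_mul =>
    intro s
    funext w
    classical
    show R.iSum (fun p : {p : List A × List A // p.1 ++ p.2 = w} =>
        R.mul (if p.1.1 = [] then R.one else R.zero) (s p.1.2)) = s w
    rw [h.iSum_eq_single _ (⟨([], w), rfl⟩ : {p : List A × List A // p.1 ++ p.2 = w}) ?hz]
    · show R.mul (if ([] : List A) = [] then R.one else R.zero) (s w) = s w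
      rw [if_pos rfl, h.one_mul]
    case hz =>
      intro p hp
      by_cases he : p.1.1 = []
      · exact absurd (Subtype.ext (Prod.ext he (by simpa [he] using p.2))) hp
      · rw [if_neg he]; exact h.zero_mul _
  case mul_one =>
    intro s
    funext w
    classical
    show R.iSum (fun p : {p : List A × List A // p.1 ++ p.2 = w} =>
        R.mul (s p.1.1) (if p.1.2 = [] then R.one else R.zero)) = s w
    rw [h.iSum_eq_single _ (⟨(w, []), by simp⟩ : {p : List A × List A // p.1 ++ p.2 = w}) ?hz]
    · show R.mul (s w) (if ([] : List A) = [] then R.one else R.zero) = s w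
      rw [if_pos rfl, h.mul_one]
    case hz =>
      intro p hp
      by_cases he : p.1.2 = []
      · exact absurd (Subtype.ext (Prod.ext (by simpa [he] using p.2) he)) hp
      · rw [if_neg he]; exact h.mul_zero _
  case zero_mul =>
    intro s; funext w
    exact h.iSum_of_zero (fun p => h.zero_mul _)
  case mul_zero =>
    intro s; funext w
    exact h.iSum_of_zero (fun p => h.mul_zero _)
  case left_distrib =>
    intro a b c
    funext w
    show R.iSum (fun p : {p : List A × List A // p.1 ++ p.2 = w} =>
        R.mul (a p.1.1) (R.add (b p.1.2) (c p.1.2))) = _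
    calc R.iSum (fun p : {p : List A × List A // p.1 ++ p.2 = w} =>
            R.mul (a p.1.1) (R.add (b p.1.2) (c p.1.2)))
        = R.iSum (fun p : {p : List A × List A // p.1 ++ p.2 = w} =>
            R.add (R.mul (a p.1.1) (b p.1.2)) (R.mul (a p.1.1) (c p.1.2))) := by
          apply h.iSum_congr; intro p; exact h.left_distrib _ _ _
      _ = _ := h.iSum_add _ _
  case right_distrib =>
    intro a b c
    funext w
    show R.iSum (fun p : {p : List A × List A // p.1 ++ p.2 = w} =>
        R.mul (R.add (a p.1.1) (b p.1.1)) (c p.1.2)) = _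
    calc R.iSum (fun p : {p : List A × List A // p.1 ++ p.2 = w} =>
            R.mul (R.add (a p.1.1) (b p.1.1)) (c p.1.2))
        = R.iSum (fun p : {p : List A × List A // p.1 ++ p.2 = w} =>
            R.add (R.mul (a p.1.1) (c p.1.2)) (R.mul (b p.1.1) (c p.1.2))) := by
          apply h.iSum_congr; intro p; exact h.right_distrib _ _ _
      _ = _ := h.iSum_add _ _
  case iSum_empty => intro ι f hι; funext w; exact h.iSum_empty _ hι
  case iSum_single => intro ι f i₀ hi; funext w; exact h.iSum_single _ i₀ hi
  case iSum_pair => intro ι f i₀ i₁ hne hcov; funext w; exact h.iSum_pair _ i₀ i₁ hne hcov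
  case iSum_partition => intro ι κ g f; funext w; exact h.iSum_partition g (fun i => f i w)
  case mul_iSum =>
    intro ι c f
    funext w
    show R.iSum (fun p : {p : List A × List A // p.1 ++ p.2 = w} =>
        R.mul (c p.1.1) (R.iSum (fun i => f i p.1.2))) = _
    calc R.iSum (fun p : {p : List A × List A // p.1 ++ p.2 = w} =>
            R.mul (c p.1.1) (R.iSum (fun i => f i p.1.2)))
        = R.iSum (fun p : {p : List A × List A // p.1 ++ p.2 = w} =>
            R.iSum (fun i => R.mul (c p.1.1) (f i p.1.2))) := by
          apply h.iSum_congr; intro p; rw [h.mul_iSum]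
      _ = R.iSum (fun i => R.iSum (fun p : {p : List A × List A // p.1 ++ p.2 = w} =>
            R.mul (c p.1.1) (f i p.1.2))) := h.iSum_comm _
  case iSum_mul =>
    intro ι c f
    funext w
    show R.iSum (fun p : {p : List A × List A // p.1 ++ p.2 = w} =>
        R.mul (R.iSum (fun i => f i p.1.1)) (c p.1.2)) = _
    calc R.iSum (fun p : {p : List A × List A // p.1 ++ p.2 = w} =>
            R.mul (R.iSum (fun i => f i p.1.1)) (c p.1.2))
        = R.iSum (fun p : {p : List A × List A // p.1 ++ p.2 = w} =>
            R.iSum (fun i => R.mul (f i p.1.1) (c p.1.2))) := by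
          apply h.iSum_congr; intro p; rw [h.iSum_mul]
      _ = R.iSum (fun i => R.iSum (fun p : {p : List A × List A // p.1 ++ p.2 = w} =>
            R.mul (f i p.1.1) (c p.1.2))) := h.iSum_comm _

end FinOpsComplete

/-! ### ω-words: concatenation and factorization lemmas -/

section OmegaWords

open CSOps

variable {A : Type}

/-- Prepending an element to an infinite sequence. -/
def cons0 {α : Type} (a : α) (f : ℕ → α) : ℕ → α
  | 0 => a
  | t + 1 => f t

theorem wcat_nil (v : ℕ → A) : wcat ([] : List A) v = v := by
  funext t; simp [wcat]

theorem wcat_cons_zero (a : A) (u : List A) (v : ℕ → A) : wcat (a :: u) v 0 = a := by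
  simp [wcat]

theorem wcat_cons_succ (a : A) (u : List A) (v : ℕ → A) (t : ℕ) :
    wcat (a :: u) v (t + 1) = wcat u v t := by
  by_cases ht : t < u.length
  · simp [wcat, ht, Nat.succ_lt_succ ht]
  · have h2 : ¬ (t + 1 < (a :: u).length) := by simp; omega
    simp only [wcat, dif_neg ht, dif_neg h2]
    congr 1
    simp

theorem wcat_cons (a : A) (u : List A) (v : ℕ → A) : wcat (a :: u) v = cons0 a (wcat u v) := by
  funext t
  cases t with
  | zero => rw [wcat_cons_zero]; rfl
  | succ t => rw [wcat_cons_succ]; rfl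

theorem wcat_append (u1 u2 : List A) (v : ℕ → A) :
    wcat (u1 ++ u2) v = wcat u1 (wcat u2 v) := by
  induction u1 with
  | nil => rw [List.nil_append, wcat_nil]
  | cons a u1 ih => rw [List.cons_append, wcat_cons, wcat_cons, ih]

theorem wcat_add (u : List A) (v : ℕ → A) (t : ℕ) : wcat u v (t + u.length) = v t := by
  induction u with
  | nil => rw [wcat_nil]; simp
  | cons a u ih =>
    have harg : t + (a :: u).length = (t + u.length) + 1 := by simp; omega
    rw [harg, wcat_cons_succ, ih]

theorem wcat_lt (u : List A) (v : ℕ → A) (t : ℕ) (h : t < u.length) :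
    wcat u v t = u.get ⟨t, h⟩ := by
  simp [wcat, h]

theorem wcat_ge (u : List A) (v : ℕ → A) (t : ℕ) (h : ¬ t < u.length) :
    wcat u v t = v (t - u.length) := by
  simp [wcat, h]

theorem wcat_singleton (a : A) (v : ℕ → A) : wcat [a] v = cons0 a v := by
  rw [wcat_cons, wcat_nil]

theorem wcat_last (u : List A) (a : A) (v : ℕ → A) : wcat (u ++ [a]) v u.length = a := by
  induction u with
  | nil => exact wcat_cons_zero a [] v
  | cons x u ih => rw [List.cons_append]; exact (wcat_cons_succ _ _ _ _).trans ih

theorem flen_shift (f : ℕ → List A) : ∀ m : ℕ,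
    flen f (m + 1) = (f 0).length + flen (fun k => f (k + 1)) m := by
  intro m
  induction m with
  | zero => show flen f 0 + (f 0).length = (f 0).length + 0; show 0 + (f 0).length = _; omega
  | succ m ih =>
    show flen f (m + 1) + (f (m + 1)).length = (f 0).length
      + (flen (fun k => f (k + 1)) m + (f (m + 1)).length)
    rw [ih]; omega

theorem flen_cons0 (u : List A) (f : ℕ → List A) : ∀ m : ℕ,
    flen (cons0 u f) (m + 1) = u.length + flen f m := by
  intro m
  induction m with
  | zero => show 0 + (u.length) = u.length + 0; omega
  | succ m ih =>
    show flen (cons0 u f) (m + 1) + (cons0 u f (m + 1)).length = u.length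
      + (flen f m + (f m).length)
    rw [ih]
    show u.length + flen f m + (f m).length = _
    omega

/-- The tail of an ω-word. -/
def wdrop (c : ℕ) (w : ℕ → A) : ℕ → A := fun t => w (t + c)

theorem isFact_head (f : ℕ → List A) (w : ℕ → A) (hf : IsFact f w) :
    wcat (f 0) (wdrop (f 0).length w) = w := by
  funext t
  by_cases ht : t < (f 0).length
  · rw [wcat_lt _ _ _ ht, hf.2 0 t ht]
    show w (0 + t) = w t
    exact congrArg w (by omega)
  · rw [wcat_ge _ _ _ ht]
    show w ((t - (f 0).length) + (f 0).length) = w t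
    exact congrArg w (by omega)

theorem isFact_tail (f : ℕ → List A) (w : ℕ → A) (hf : IsFact f w) :
    IsFact (fun m => f (m + 1)) (wdrop (f 0).length w) := by
  constructor
  · intro N
    obtain ⟨m, hm⟩ := hf.1 (N + (f 0).length)
    cases m with
    | zero => exact ⟨0, by have h0 : flen f 0 = 0 := rfl; omega⟩
    | succ m' =>
      refine ⟨m', ?_⟩
      have := flen_shift f m'
      omega
  · intro m i hi
    rw [hf.2 (m + 1) i hi]
    show w (flen f (m + 1) + i) = w ((flen (fun k => f (k + 1)) m + i) + (f 0).length)
    exact congrArg w (by have := flen_shift f m; omega)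

theorem isFact_cons (u : List A) (w' : ℕ → A) (f' : ℕ → List A) (hf : IsFact f' w') :
    IsFact (cons0 u f') (wcat u w') := by
  constructor
  · intro N
    obtain ⟨m, hm⟩ := hf.1 N
    refine ⟨m + 1, ?_⟩
    have := flen_cons0 u f' m
    omega
  · intro m i hi
    cases m with
    | zero =>
      show u.get ⟨i, hi⟩ = wcat u w' (0 + i)
      have harg : (0 : ℕ) + i = i := by omega
      rw [harg, wcat_lt u w' i hi]
    | succ m =>
      show (f' m).get ⟨i, hi⟩ = wcat u w' (flen (cons0 u f') (m + 1) + i)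
      rw [hf.2 m i hi]
      have harg : flen (cons0 u f') (m + 1) + i = (flen f' m + i) + u.length := by
        have := flen_cons0 u f' m; omega
      rw [harg, wcat_add]

theorem sigmaFact_ext {w : ℕ → A}
    (x y : Σ u : {u : List A × (ℕ → A) // wcat u.1 u.2 = w}, {f : ℕ → List A // IsFact f u.1.2})
    (h1 : x.1.1 = y.1.1) (h2 : x.2.1 = y.2.1) : x = y := by
  obtain ⟨⟨u, hu⟩, ⟨f, hf⟩⟩ := x
  obtain ⟨⟨v, hv⟩, ⟨g, hg⟩⟩ := y
  simp only at h1 h2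
  subst h1; subst h2; rfl

/-- Splitting off the first factor of a factorization. -/
def factEquiv (w : ℕ → A) :
    (Σ u : {u : List A × (ℕ → A) // wcat u.1 u.2 = w}, {f : ℕ → List A // IsFact f u.1.2}) ≃
      {f : ℕ → List A // IsFact f w} where
  toFun x := ⟨cons0 x.1.1.1 x.2.1, by
    have hc := isFact_cons x.1.1.1 x.1.1.2 x.2.1 x.2.2
    rwa [x.1.2] at hc⟩
  invFun p := ⟨⟨(p.1 0, wdrop (p.1 0).length w), isFact_head p.1 w p.2⟩,
    ⟨fun m => p.1 (m + 1), isFact_tail p.1 w p.2⟩⟩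
  left_inv := by
    rintro ⟨⟨⟨u, w'⟩, hu⟩, ⟨f', hf⟩⟩
    subst hu
    apply sigmaFact_ext
    · show ((u : List A), wdrop u.length (wcat u w')) = (u, w')
      have hw : wdrop u.length (wcat u w') = w' := by
        funext t; exact wcat_add u w' t
      rw [hw]
    · funext m; cases m <;> rfl
  right_inv := by
    rintro ⟨f, hf⟩
    apply Subtype.ext
    funext m
    cases m <;> rfl

end OmegaWords

/-! ### Lemmas for the semimodule of power series over ω-words -/

section OmOpsLemmas

open CSOps

variable {S : Type} {R : CSOps S} {P0 : CPOps S S} {A : Type}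

theorem omOps_peel (h : R.IsComplete) (hP0 : P0.IsComplete R)
    (hsm : ∀ a b : S, P0.smul a b = R.mul a b) (s : ℕ → List A → S) :
    (omOps R P0 A).smul (s 0) ((omOps R P0 A).iProd (fun j => s (j + 1)))
      = (omOps R P0 A).iProd s := by
  funext w
  show R.iSum (fun u : {u : List A × (ℕ → A) // wcat u.1 u.2 = w} =>
      R.mul (s 0 u.1.1) (R.iSum (fun f : {f : ℕ → List A // IsFact f u.1.2} =>
        P0.iProd (fun j => s (j + 1) (f.1 j)))))
    = R.iSum (fun f : {f : ℕ → List A // IsFact f w} => P0.iProd (fun j => s j (f.1 j)))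
  calc R.iSum (fun u : {u : List A × (ℕ → A) // wcat u.1 u.2 = w} =>
          R.mul (s 0 u.1.1) (R.iSum (fun f : {f : ℕ → List A // IsFact f u.1.2} =>
            P0.iProd (fun j => s (j + 1) (f.1 j)))))
      = R.iSum (fun u : {u : List A × (ℕ → A) // wcat u.1 u.2 = w} =>
          R.iSum (fun f : {f : ℕ → List A // IsFact f u.1.2} =>
            R.mul (s 0 u.1.1) (P0.iProd (fun j => s (j + 1) (f.1 j))))) := by
        apply h.iSum_congr; intro u; rw [h.mul_iSum]
    _ = R.iSum (fun x : (Σ u : {u : List A × (ℕ → A) // wcat u.1 u.2 = w},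
          {f : ℕ → List A // IsFact f u.1.2}) =>
          R.mul (s 0 x.1.1.1) (P0.iProd (fun j => s (j + 1) (x.2.1 j)))) :=
        (h.iSum_sigma (fun x : (Σ u : {u : List A × (ℕ → A) // wcat u.1 u.2 = w},
          {f : ℕ → List A // IsFact f u.1.2}) =>
          R.mul (s 0 x.1.1.1) (P0.iProd (fun j => s (j + 1) (x.2.1 j))))).symm
    _ = R.iSum (fun f : {f : ℕ → List A // IsFact f w} =>
          R.mul (s 0 (f.1 0)) (P0.iProd (fun j => s (j + 1) (f.1 (j + 1))))) :=
        h.iSum_equiv' (factEquiv w) (fun f =>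
          R.mul (s 0 (f.1 0)) (P0.iProd (fun j => s (j + 1) (f.1 (j + 1)))))
    _ = R.iSum (fun f : {f : ℕ → List A // IsFact f w} =>
          P0.iProd (fun j => s j (f.1 j))) := by
        apply h.iSum_congr; intro f
        have hp := hP0.smul_iProd_shift (fun j => s j (f.1 j))
        rw [hsm] at hp
        exact hp

/-- The double-splitting equivalence for `mul_smul`. -/
def smulEquiv (w : ℕ → A) :
    (Σ u : {u : List A × (ℕ → A) // wcat u.1 u.2 = w},
        {p : List A × List A // p.1 ++ p.2 = u.1.1}) ≃
      (Σ p : {p : List A × (ℕ → A) // wcat p.1 p.2 = w},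
        {q : List A × (ℕ → A) // wcat q.1 q.2 = p.1.2}) where
  toFun x := ⟨⟨(x.2.1.1, wcat x.2.1.2 x.1.1.2), by
      dsimp only; rw [← wcat_append, x.2.2, x.1.2]⟩,
    ⟨(x.2.1.2, x.1.1.2), rfl⟩⟩
  invFun y := ⟨⟨(y.1.1.1 ++ y.2.1.1, y.2.1.2), by
      dsimp only; rw [wcat_append, y.2.2]; exact y.1.2⟩,
    ⟨(y.1.1.1, y.2.1.1), rfl⟩⟩
  left_inv := by
    rintro ⟨⟨⟨u, w'⟩, hu⟩, ⟨⟨u1, u2⟩, hs⟩⟩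
    simp only at hs
    subst hs; subst hu; rfl
  right_inv := by
    rintro ⟨⟨⟨u1, w1⟩, h1⟩, ⟨⟨u2, w2⟩, h2⟩⟩
    simp only at h2
    subst h2; subst h1; rfl

theorem omOps_mul_smul (h : R.IsComplete) (a b : List A → S) (v : (ℕ → A) → S) :
    (omOps R P0 A).smul ((finOps R A).mul a b) v
      = (omOps R P0 A).smul a ((omOps R P0 A).smul b v) := by
  funext w
  show R.iSum (fun u : {u : List A × (ℕ → A) // wcat u.1 u.2 = w} =>
      R.mul (R.iSum (fun p : {p : List A × List A // p.1 ++ p.2 = u.1.1} =>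
        R.mul (a p.1.1) (b p.1.2))) (v u.1.2))
    = R.iSum (fun p : {p : List A × (ℕ → A) // wcat p.1 p.2 = w} =>
        R.mul (a p.1.1) (R.iSum (fun q : {q : List A × (ℕ → A) // wcat q.1 q.2 = p.1.2} =>
          R.mul (b q.1.1) (v q.1.2))))
  calc R.iSum (fun u : {u : List A × (ℕ → A) // wcat u.1 u.2 = w} =>
          R.mul (R.iSum (fun p : {p : List A × List A // p.1 ++ p.2 = u.1.1} =>
            R.mul (a p.1.1) (b p.1.2))) (v u.1.2))
      = R.iSum (fun u : {u : List A × (ℕ → A) // wcat u.1 u.2 = w} =>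
          R.iSum (fun p : {p : List A × List A // p.1 ++ p.2 = u.1.1} =>
            R.mul (R.mul (a p.1.1) (b p.1.2)) (v u.1.2))) := by
        apply h.iSum_congr; intro u; rw [h.iSum_mul]
    _ = R.iSum (fun x : (Σ u : {u : List A × (ℕ → A) // wcat u.1 u.2 = w},
          {p : List A × List A // p.1 ++ p.2 = u.1.1}) =>
          R.mul (R.mul (a x.2.1.1) (b x.2.1.2)) (v x.1.1.2)) :=
        (h.iSum_sigma (fun x : (Σ u : {u : List A × (ℕ → A) // wcat u.1 u.2 = w},
          {p : List A × List A // p.1 ++ p.2 = u.1.1}) =>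
          R.mul (R.mul (a x.2.1.1) (b x.2.1.2)) (v x.1.1.2))).symm
    _ = R.iSum (fun x : (Σ u : {u : List A × (ℕ → A) // wcat u.1 u.2 = w},
          {p : List A × List A // p.1 ++ p.2 = u.1.1}) =>
          R.mul (a x.2.1.1) (R.mul (b x.2.1.2) (v x.1.1.2))) := by
        apply h.iSum_congr; intro x; exact h.mul_assoc _ _ _
    _ = R.iSum (fun y : (Σ p : {p : List A × (ℕ → A) // wcat p.1 p.2 = w},
          {q : List A × (ℕ → A) // wcat q.1 q.2 = p.1.2}) =>
          R.mul (a y.1.1.1) (R.mul (b y.2.1.1) (v y.2.1.2))) := by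
        refine h.iSum_equiv' (smulEquiv w) (fun y =>
          R.mul (a y.1.1.1) (R.mul (b y.2.1.1) (v y.2.1.2)))
    _ = R.iSum (fun p : {p : List A × (ℕ → A) // wcat p.1 p.2 = w} =>
          R.iSum (fun q : {q : List A × (ℕ → A) // wcat q.1 q.2 = p.1.2} =>
            R.mul (a p.1.1) (R.mul (b q.1.1) (v q.1.2)))) :=
        h.iSum_sigma (fun y : (Σ p : {p : List A × (ℕ → A) // wcat p.1 p.2 = w},
          {q : List A × (ℕ → A) // wcat q.1 q.2 = p.1.2}) =>
          R.mul (a y.1.1.1) (R.mul (b y.2.1.1) (v y.2.1.2)))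
    _ = R.iSum (fun p : {p : List A × (ℕ → A) // wcat p.1 p.2 = w} =>
        R.mul (a p.1.1) (R.iSum (fun q : {q : List A × (ℕ → A) // wcat q.1 q.2 = p.1.2} =>
          R.mul (b q.1.1) (v q.1.2)))) := by
        apply h.iSum_congr; intro p; rw [h.mul_iSum]

theorem omOps_smul_vSum (h : R.IsComplete) {ι : Type} (a : List A → S) (g : ι → (ℕ → A) → S) :
    (omOps R P0 A).smul a ((omOps R P0 A).vSum g)
      = (omOps R P0 A).vSum (fun i => (omOps R P0 A).smul a (g i)) := by
  funext w
  show R.iSum (fun u : {u : List A × (ℕ → A) // wcat u.1 u.2 = w} =>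
      R.mul (a u.1.1) (R.iSum (fun i => g i u.1.2)))
    = R.iSum (fun i => R.iSum (fun u : {u : List A × (ℕ → A) // wcat u.1 u.2 = w} =>
        R.mul (a u.1.1) (g i u.1.2)))
  calc R.iSum (fun u : {u : List A × (ℕ → A) // wcat u.1 u.2 = w} =>
          R.mul (a u.1.1) (R.iSum (fun i => g i u.1.2)))
      = R.iSum (fun u : {u : List A × (ℕ → A) // wcat u.1 u.2 = w} =>
          R.iSum (fun i => R.mul (a u.1.1) (g i u.1.2))) := by
        apply h.iSum_congr; intro u; rw [h.mul_iSum]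
    _ = _ := h.iSum_comm _

theorem omOps_iSum_smul (h : R.IsComplete) {ι : Type} (g : ι → List A → S) (v : (ℕ → A) → S) :
    (omOps R P0 A).smul ((finOps R A).iSum g) v
      = (omOps R P0 A).vSum (fun i => (omOps R P0 A).smul (g i) v) := by
  funext w
  show R.iSum (fun u : {u : List A × (ℕ → A) // wcat u.1 u.2 = w} =>
      R.mul (R.iSum (fun i => g i u.1.1)) (v u.1.2))
    = R.iSum (fun i => R.iSum (fun u : {u : List A × (ℕ → A) // wcat u.1 u.2 = w} =>
        R.mul (g i u.1.1) (v u.1.2)))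
  calc R.iSum (fun u : {u : List A × (ℕ → A) // wcat u.1 u.2 = w} =>
          R.mul (R.iSum (fun i => g i u.1.1)) (v u.1.2))
      = R.iSum (fun u : {u : List A × (ℕ → A) // wcat u.1 u.2 = w} =>
          R.iSum (fun i => R.mul (g i u.1.1) (v u.1.2))) := by
        apply h.iSum_congr; intro u; rw [h.iSum_mul]
    _ = _ := h.iSum_comm _

theorem omOps_zero_smul (h : R.IsComplete) (v : (ℕ → A) → S) :
    (omOps R P0 A).smul ((finOps R A).zero) v = (omOps R P0 A).vzero := by
  funext w
  exact h.iSum_of_zero (fun u => h.zero_mul _)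

theorem omOps_iProd_zero_head (h : R.IsComplete) (hP0 : P0.IsComplete R)
    (hsm : ∀ a b : S, P0.smul a b = R.mul a b) (s : ℕ → List A → S)
    (hs : s 0 = (finOps R A).zero) :
    (omOps R P0 A).iProd s = (omOps R P0 A).vzero := by
  rw [← omOps_peel h hP0 hsm s, hs, omOps_zero_smul h]

end OmOpsLemmas

/-! ### Decomposition of the index set of `M^{ω,k}` -/

section OmegaDecomp

open CSOps

variable {S : Type} {R : CSOps S} {P0 : CPOps S S} {A : Type} {n : ℕ}

theorem inPk_cons {k : ℕ} (j : Fin n) (st : ℕ → Fin n) :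
    InPk n k (cons0 j st) ↔ InPk n k st := by
  constructor
  · intro h N
    obtain ⟨t, ht, hlt⟩ := h (N + 1)
    cases t with
    | zero => omega
    | succ t => exact ⟨t, by omega, hlt⟩
  · intro h N
    obtain ⟨t, ht, hlt⟩ := h N
    exact ⟨t + 1, by omega, hlt⟩

theorem inPk_wcat {k : ℕ} (u : List (Fin n)) (st : ℕ → Fin n) :
    InPk n k (wcat u st) ↔ InPk n k st := by
  constructor
  · intro h N
    obtain ⟨t, ht, hlt⟩ := h (N + u.length)
    refine ⟨t - u.length, by omega, ?_⟩
    rw [wcat_ge u st t (by omega)] at hlt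
    exact hlt
  · intro h N
    obtain ⟨t, ht, hlt⟩ := h N
    refine ⟨t + u.length, by omega, ?_⟩
    rw [wcat_add u st t]
    exact hlt

theorem inPk_offset {k c : ℕ} (st : ℕ → Fin n) (h : InPk n k st) :
    InPk n k (fun t => st (t + c)) := by
  intro N
  obtain ⟨t, ht, hlt⟩ := h (N + c)
  refine ⟨t - c, by omega, ?_⟩
  show (st ((t - c) + c) : ℕ) < k
  have harg : t - c + c = t := by omega
  rw [harg]
  exact hlt

theorem pathEntry_cons {K : Type} (M : IMat n K) (a m : ℕ) (c j : Fin n)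
    (ℓ : ℕ → ℕ) (st : ℕ → Fin n) :
    pathEntry M a c (cons0 m ℓ) (cons0 j st)
      = cons0 (M a m c j) (pathEntry M m j ℓ st) := by
  funext t
  match t with
  | 0 => rfl
  | 1 => rfl
  | (t + 2) => rfl

theorem iProd_pathEntry_cons (h : R.IsComplete) (hP0 : P0.IsComplete R)
    (hsm : ∀ a b : S, P0.smul a b = R.mul a b) (M : IMat n (List A → S)) (a m : ℕ)
    (c j : Fin n) (ℓ : ℕ → ℕ) (st : ℕ → Fin n) :
    (omOps R P0 A).iProd (pathEntry M a c (cons0 m ℓ) (cons0 j st))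
      = (omOps R P0 A).smul (M a m c j) ((omOps R P0 A).iProd (pathEntry M m j ℓ st)) := by
  rw [pathEntry_cons]
  exact (omOps_peel h hP0 hsm (cons0 (M a m c j) (pathEntry M m j ℓ st))).symm

/-- The index set of `(M^{ω,k})_p`. -/
abbrev QT (n k : ℕ) := {q : (ℕ → ℕ) × (ℕ → Fin n) // (∀ t, 1 ≤ q.1 t) ∧ InPk n k q.2}

/-- Peeling the first step of a path whose first level is `m`. -/
def consQEquiv (n k m : ℕ) (hm : 1 ≤ m) : (Fin n × QT n k) ≃ {q : QT n k // q.1.1 0 = m} where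
  toFun p := ⟨⟨(cons0 m p.2.1.1, cons0 p.1 p.2.1.2),
      ⟨by intro t; cases t with
        | zero => exact hm
        | succ t => exact p.2.2.1 t,
       (inPk_cons p.1 p.2.1.2).mpr p.2.2.2⟩⟩, rfl⟩
  invFun q := (q.1.1.2 0, ⟨(fun t => q.1.1.1 (t + 1), fun t => q.1.1.2 (t + 1)),
      ⟨fun t => q.1.2.1 (t + 1), inPk_offset _ q.1.2.2⟩⟩)
  left_inv := by
    rintro ⟨j₁, ⟨⟨ℓ, st⟩, hq⟩⟩
    rfl
  right_inv := by
    rintro ⟨⟨⟨ℓ, st⟩, hq⟩, h0⟩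
    apply Subtype.ext
    apply Subtype.ext
    show ((cons0 m (fun t => ℓ (t + 1)), cons0 (st 0) (fun t => st (t + 1)))
        : (ℕ → ℕ) × (ℕ → Fin n)) = (ℓ, st)
    have h1 : cons0 m (fun t => ℓ (t + 1)) = ℓ := by
      funext t; cases t with
      | zero => exact h0.symm
      | succ t => rfl
    have h2 : cons0 (st 0) (fun t => st (t + 1)) = st := by
      funext t; cases t <;> rfl
    rw [h1, h2]

/-- The paths starting with a push and never returning to level 1. -/
def upQEquiv (n k : ℕ) : (Fin n × QT n k) ≃
    {q : {q : QT n k // q.1.1 0 = 2} // ¬ ∃ t, q.1.1.1 t = 1} where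
  toFun p := ⟨⟨⟨(cons0 2 (fun t => p.2.1.1 t + 1), cons0 p.1 p.2.1.2),
      ⟨by intro t; cases t with
        | zero => show (1 : ℕ) ≤ 2; omega
        | succ t => show 1 ≤ p.2.1.1 t + 1; omega,
       (inPk_cons p.1 p.2.1.2).mpr p.2.2.2⟩⟩, rfl⟩,
    by
      rintro ⟨t, ht⟩
      cases t with
      | zero =>
        have : (2 : ℕ) = 1 := ht
        omega
      | succ t =>
        have : p.2.1.1 t + 1 = 1 := ht
        have h1 := p.2.2.1 t
        omega⟩
  invFun q := (q.1.1.1.2 0, ⟨(fun t => q.1.1.1.1 (t + 1) - 1, fun t => q.1.1.1.2 (t + 1)),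
      ⟨by
        intro t
        have h1 : 1 ≤ q.1.1.1.1 (t + 1) := q.1.1.2.1 (t + 1)
        have h2 : q.1.1.1.1 (t + 1) ≠ 1 := fun hh => q.2 ⟨t + 1, hh⟩
        show 1 ≤ q.1.1.1.1 (t + 1) - 1
        omega,
       inPk_offset _ q.1.1.2.2⟩⟩)
  left_inv := by
    rintro ⟨j₁, ⟨⟨ℓ, st⟩, hq⟩⟩
    have h1 : (fun t => cons0 2 (fun t' => ℓ t' + 1) (t + 1) - 1) = ℓ := by
      funext t; show ℓ t + 1 - 1 = ℓ t; omega
    show (j₁, (⟨((fun t => cons0 2 (fun t' => ℓ t' + 1) (t + 1) - 1),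
        (fun t => cons0 j₁ st (t + 1))), _⟩ : QT n k)) = (j₁, ⟨(ℓ, st), hq⟩)
    apply Prod.ext rfl
    apply Subtype.ext
    show ((fun t => cons0 2 (fun t' => ℓ t' + 1) (t + 1) - 1), st) = (ℓ, st)
    rw [h1]
  right_inv := by
    rintro ⟨⟨⟨⟨ℓ, st⟩, hq⟩, h0⟩, hne⟩
    apply Subtype.ext
    apply Subtype.ext
    apply Subtype.ext
    show ((cons0 2 (fun t => (ℓ (t + 1) - 1) + 1), cons0 (st 0) (fun t => st (t + 1)))
        : (ℕ → ℕ) × (ℕ → Fin n)) = (ℓ, st)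
    have h1 : cons0 2 (fun t => (ℓ (t + 1) - 1) + 1) = ℓ := by
      funext t; cases t with
      | zero => exact h0.symm
      | succ t =>
        show ℓ (t + 1) - 1 + 1 = ℓ (t + 1)
        have hge : 1 ≤ ℓ (t + 1) := hq.1 (t + 1)
        omega
    have h2 : cons0 (st 0) (fun t => st (t + 1)) = st := by
      funext t; cases t <;> rfl
    rw [h1, h2]

theorem wcatSyn_zero {α : Type} (x a : α) (g : ℕ × Fin n → α) (l : List (ℕ × Fin n))
    (v : ℕ → α) : wcat (x :: (l.map g ++ [a])) v 0 = x := wcat_cons_zero _ _ _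

theorem wcatSyn_last {α : Type} (x a : α) (g : ℕ × Fin n → α) (l : List (ℕ × Fin n))
    (v : ℕ → α) : wcat (x :: (l.map g ++ [a])) v (l.length + 1) = a := by
  rw [wcat_cons_succ]
  have h := wcat_last (l.map g) a v
  simpa using h

theorem wcatSyn_mid {α : Type} (x a : α) (g : ℕ × Fin n → α) (l : List (ℕ × Fin n))
    (v : ℕ → α) (s : ℕ) (hs : s < l.length) :
    wcat (x :: (l.map g ++ [a])) v (s + 1) = g (l.get ⟨s, hs⟩) := by
  rw [wcat_cons_succ, wcat_lt _ _ s (by simp; omega)]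
  rw [List.get_eq_getElem, List.getElem_append_left (by simpa using hs)]
  simp

theorem wcatSyn_tail {α : Type} (x a : α) (g : ℕ × Fin n → α) (l : List (ℕ × Fin n))
    (v : ℕ → α) (t : ℕ) : wcat (x :: (l.map g ++ [a])) v (t + (l.length + 2)) = v t := by
  have harg : t + (l.length + 2) = t + (x :: (l.map g ++ [a])).length := by simp
  rw [harg, wcat_add]

theorem wcat_reconstruct {α : Type} : ∀ (T : ℕ) (f : ℕ → α),
    wcat (f 0 :: ((List.range T).map (fun s => f (s + 1)) ++ [f (T + 1)]))
      (fun t => f (T + 2 + t)) = f := by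
  intro T
  induction T with
  | zero =>
    intro f
    funext t
    match t with
    | 0 => exact wcat_cons_zero _ _ _
    | (t + 1) =>
      rw [wcat_cons_succ]
      show wcat ([] ++ [f 1]) (fun t => f (2 + t)) t = f (t + 1)
      rw [List.nil_append]
      match t with
      | 0 => exact wcat_cons_zero _ _ _
      | (t + 1) =>
        rw [wcat_cons_succ, wcat_nil]
        exact congrArg f (by omega)
  | succ T ih =>
    intro f
    funext t
    cases t with
    | zero => exact wcat_cons_zero _ _ _
    | succ t =>
      rw [wcat_cons_succ]
      have hlist : (List.range (T + 1)).map (fun s => f (s + 1)) ++ [f (T + 1 + 1)]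
          = ((fun u => f (u + 1)) 0 :: ((List.range T).map
              (fun s => (fun u => f (u + 1)) (s + 1)) ++ [(fun u => f (u + 1)) (T + 1)])) := by
        rw [List.range_succ_eq_map, List.map_cons, List.map_map]
        rfl
      have htail : (fun t => f (T + 1 + 2 + t)) = (fun t => (fun u => f (u + 1)) (T + 2 + t)) := by
        funext t; exact congrArg f (by omega)
      rw [hlist, htail]
      exact congrFun (ih (fun u => f (u + 1))) t

theorem reconstruct_gen {α : Type} (f : ℕ → α) (T : ℕ) (hT : 1 ≤ T)
    (u : List α) (hu : u = (List.range (T - 1)).map (fun s => f (s + 1)))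
    (v : ℕ → α) (hv : v = fun t => f (t + (T + 1))) :
    wcat (f 0 :: (u ++ [f T])) v = f := by
  subst hu hv
  have h := wcat_reconstruct (T - 1) f
  have e1 : T - 1 + 1 = T := by omega
  have e2 : (fun t => f (t + (T + 1))) = (fun t => f (T - 1 + 2 + t)) := by
    funext t; exact congrArg f (by omega)
  rw [e1] at h
  rw [e2]
  exact h

/-- Decomposing a path that pushes and later returns to level 1, at the first
return: initial state, return state, finite excursion (one level down) and tail. -/
def retEquiv (n k : ℕ) :
    (Fin n × Fin n × {l : List (ℕ × Fin n) // ∀ v ∈ l, 1 ≤ v.1} × QT n k) ≃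
      {q : {q : QT n k // q.1.1 0 = 2} // ∃ t, q.1.1.1 t = 1} where
  toFun p :=
    ⟨⟨⟨(wcat (2 :: (p.2.2.1.1.map (fun v => v.1 + 1) ++ [1])) p.2.2.2.1.1,
        wcat (p.1 :: (p.2.2.1.1.map Prod.snd ++ [p.2.1])) p.2.2.2.1.2),
      ⟨by
        intro t
        dsimp only
        by_cases ht : t < (2 :: (p.2.2.1.1.map (fun v => v.1 + 1) ++ [1])).length
        · rw [wcat_lt _ _ t ht]
          have hmem := List.get_mem (2 :: (p.2.2.1.1.map (fun v => v.1 + 1) ++ [1])) ⟨t, ht⟩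
          rcases List.mem_cons.mp hmem with he | he
          · omega
          · rcases List.mem_append.mp he with he' | he'
            · obtain ⟨u, _, hu⟩ := List.mem_map.mp he'
              omega
            · rw [List.mem_singleton] at he'
              omega
        · rw [wcat_ge _ _ t ht]
          exact p.2.2.2.2.1 _,
       (inPk_wcat _ _).mpr p.2.2.2.2.2⟩⟩,
      wcatSyn_zero 2 1 (fun v => v.1 + 1) p.2.2.1.1 p.2.2.2.1.1⟩,
     ⟨p.2.2.1.1.length + 1, wcatSyn_last 2 1 (fun v => v.1 + 1) p.2.2.1.1 p.2.2.2.1.1⟩⟩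
  invFun q :=
    (q.1.1.1.2 0, q.1.1.1.2 (Nat.find q.2),
     ⟨(List.range (Nat.find q.2 - 1)).map
        (fun s => (q.1.1.1.1 (s + 1) - 1, q.1.1.1.2 (s + 1))), by
        intro v hv
        obtain ⟨s, hs, rfl⟩ := List.mem_map.mp hv
        have hsr : s < Nat.find q.2 - 1 := List.mem_range.mp hs
        have hne : q.1.1.1.1 (s + 1) ≠ 1 := Nat.find_min q.2 (by omega)
        have hge : 1 ≤ q.1.1.1.1 (s + 1) := q.1.1.2.1 (s + 1)
        show 1 ≤ q.1.1.1.1 (s + 1) - 1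
        omega⟩,
     ⟨(fun t => q.1.1.1.1 (t + (Nat.find q.2 + 1)),
       fun t => q.1.1.1.2 (t + (Nat.find q.2 + 1))),
      ⟨fun t => q.1.1.2.1 _, inPk_offset _ q.1.1.2.2⟩⟩)
  left_inv := by
    rintro ⟨j₁, j₂, ⟨l, hl⟩, ⟨⟨ℓ', st'⟩, hq'⟩⟩
    have hfind : Nat.find (⟨l.length + 1,
        wcatSyn_last 2 1 (fun v => v.1 + 1) l ℓ'⟩ :
          ∃ t, wcat (2 :: (l.map (fun v => v.1 + 1) ++ [1])) ℓ' t = 1) = l.length + 1 := by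
      rw [Nat.find_eq_iff]
      refine ⟨wcatSyn_last 2 1 (fun v => v.1 + 1) l ℓ', ?_⟩
      intro m hm
      cases m with
      | zero =>
        rw [wcatSyn_zero]
        omega
      | succ s =>
        rw [wcatSyn_mid 2 1 (fun v => v.1 + 1) l ℓ' s (by omega)]
        have := hl (l.get ⟨s, by omega⟩) (List.get_mem l ⟨s, by omega⟩)
        omega
    refine Prod.ext ?_ (Prod.ext ?_ (Prod.ext ?_ ?_))
    · exact wcatSyn_zero j₁ j₂ Prod.snd l st'
    · show wcat (j₁ :: (l.map Prod.snd ++ [j₂])) st' (Nat.find _) = j₂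
      rw [hfind]
      exact wcatSyn_last _ _ _ _ _
    · apply Subtype.ext
      show (List.range (Nat.find _ - 1)).map _ = l
      rw [hfind]
      have hll : l.length + 1 - 1 = l.length := by omega
      rw [hll]
      apply List.ext_getElem (by simp)
      intro s h1 h2
      have hs : s < l.length := by simpa using h1
      rw [List.getElem_map, List.getElem_range]
      show (wcat (2 :: (l.map (fun v => v.1 + 1) ++ [1])) ℓ' (s + 1) - 1,
        wcat (j₁ :: (l.map Prod.snd ++ [j₂])) st' (s + 1)) = l[s]
      have e1 : wcat (2 :: (l.map (fun v => v.1 + 1) ++ [1])) ℓ' (s + 1)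
          = (l.get ⟨s, hs⟩).1 + 1 := wcatSyn_mid _ _ _ _ _ _ hs
      have e2 : wcat (j₁ :: (l.map Prod.snd ++ [j₂])) st' (s + 1)
          = (l.get ⟨s, hs⟩).2 := wcatSyn_mid _ _ _ _ _ _ hs
      rw [e1, e2]
      show ((l.get ⟨s, hs⟩).1 + 1 - 1, (l.get ⟨s, hs⟩).2) = l[s]
      have : l.get ⟨s, hs⟩ = l[s] := rfl
      rw [this]
      have h11 : l[s].1 + 1 - 1 = l[s].1 := by omega
      rw [h11]
    · apply Subtype.ext
      show ((fun t => wcat (2 :: (l.map (fun v => v.1 + 1) ++ [1])) ℓ' (t + (Nat.find _ + 1))),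
          (fun t => wcat (j₁ :: (l.map Prod.snd ++ [j₂])) st' (t + (Nat.find _ + 1))))
        = (ℓ', st')
      rw [hfind]
      have e1 : (fun t => wcat (2 :: (l.map (fun v => v.1 + 1) ++ [1])) ℓ'
          (t + (l.length + 1 + 1))) = ℓ' := by
        funext t
        exact wcatSyn_tail 2 1 (fun v => v.1 + 1) l ℓ' t
      have e2 : (fun t => wcat (j₁ :: (l.map Prod.snd ++ [j₂])) st'
          (t + (l.length + 1 + 1))) = st' := by
        funext t
        exact wcatSyn_tail j₁ j₂ Prod.snd l st' t
      rw [e1, e2]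
  right_inv := by
    rintro ⟨⟨⟨⟨ℓ, st⟩, hq⟩, h0⟩, hex⟩
    have hT1 : ℓ (Nat.find hex) = 1 := Nat.find_spec hex
    have hTpos : 1 ≤ Nat.find hex := by
      rcases Nat.eq_zero_or_pos (Nat.find hex) with h | h
      · exfalso
        have hsp := Nat.find_spec hex
        rw [h] at hsp
        have h0' : ℓ 0 = 2 := h0
        have hsp' : ℓ 0 = 1 := hsp
        omega
      · exact h
    apply Subtype.ext
    apply Subtype.ext
    apply Subtype.ext
    have hmap : ((List.range (Nat.find hex - 1)).map
          (fun s => (ℓ (s + 1) - 1, st (s + 1)))).map (fun v => v.1 + 1)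
        = (List.range (Nat.find hex - 1)).map (fun s => ℓ (s + 1)) := by
      rw [List.map_map]
      apply List.map_congr_left
      intro s hs
      have hsr : s < Nat.find hex - 1 := List.mem_range.mp hs
      have hne : ℓ (s + 1) ≠ 1 := Nat.find_min hex (by omega)
      have hge : 1 ≤ ℓ (s + 1) := hq.1 (s + 1)
      show ℓ (s + 1) - 1 + 1 = ℓ (s + 1)
      omega
    have hmap2 : ((List.range (Nat.find hex - 1)).map
          (fun s => (ℓ (s + 1) - 1, st (s + 1)))).map Prod.snd
        = (List.range (Nat.find hex - 1)).map (fun s => st (s + 1)) := by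
      rw [List.map_map]
      apply List.map_congr_left
      intro s _
      rfl
    have e1 : wcat (2 :: (((List.range (Nat.find hex - 1)).map
          (fun s => (ℓ (s + 1) - 1, st (s + 1)))).map (fun v => v.1 + 1) ++ [1]))
        (fun t => ℓ (t + (Nat.find hex + 1))) = ℓ := by
      rw [hmap]
      have h0' : ℓ 0 = 2 := h0
      have hrec := reconstruct_gen ℓ (Nat.find hex) hTpos _ rfl _ rfl
      rw [h0', hT1] at hrec
      exact hrec
    have e2 : wcat (st 0 :: (((List.range (Nat.find hex - 1)).map
          (fun s => (ℓ (s + 1) - 1, st (s + 1)))).map Prod.snd ++ [st (Nat.find hex)]))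
        (fun t => st (t + (Nat.find hex + 1))) = st := by
      rw [hmap2]
      exact reconstruct_gen st (Nat.find hex) hTpos _ rfl _ rfl
    exact Prod.ext e1 e2

theorem omOps_smul_vzero (h : R.IsComplete) (a : List A → S) :
    (omOps R P0 A).smul a (omOps R P0 A).vzero = (omOps R P0 A).vzero := by
  funext w
  exact h.iSum_of_zero (fun u => h.mul_zero _)

theorem omOps_vSum_congr {ι : Type} {f g : ι → (ℕ → A) → S} (hfg : ∀ i, f i = g i) :
    (omOps R P0 A).vSum f = (omOps R P0 A).vSum g := by
  have : f = g := funext hfg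
  rw [this]

theorem omOps_vSum_equiv' (h : R.IsComplete) {ι κ : Type} (e : ι ≃ κ) (g : κ → (ℕ → A) → S) :
    (omOps R P0 A).vSum (fun i => g (e i)) = (omOps R P0 A).vSum g := by
  funext w
  exact h.iSum_equiv' e (fun j => g j w)

theorem omOps_vSum_partition (h : R.IsComplete) {ι κ : Type} (g : ι → κ)
    (f : ι → (ℕ → A) → S) :
    (omOps R P0 A).vSum (fun j : κ => (omOps R P0 A).vSum
        (fun i : {i : ι // g i = j} => f i.1))
      = (omOps R P0 A).vSum f := by
  funext w
  exact h.iSum_partition g (fun i => f i w)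

open Classical in
theorem omOps_vSum_split (h : R.IsComplete) {ι : Type} (p : ι → Prop) (f : ι → (ℕ → A) → S) :
    (omOps R P0 A).vSum f = (omOps R P0 A).vadd
      ((omOps R P0 A).vSum fun i : {i // p i} => f i.1)
      ((omOps R P0 A).vSum fun i : {i // ¬ p i} => f i.1) := by
  funext w
  exact h.iSum_split p (fun i => f i w)

theorem omOps_vSum_of_zero (h : R.IsComplete) {ι : Type} {f : ι → (ℕ → A) → S}
    (hf : ∀ i, f i = (omOps R P0 A).vzero) : (omOps R P0 A).vSum f = (omOps R P0 A).vzero := by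
  funext w
  exact h.iSum_of_zero (fun i => congrFun (hf i) w)

theorem omOps_vSum_eq_pair (h : R.IsComplete) {ι : Type} (f : ι → (ℕ → A) → S) (i₀ i₁ : ι)
    (hne : i₀ ≠ i₁) (hz : ∀ i, i ≠ i₀ → i ≠ i₁ → f i = (omOps R P0 A).vzero) :
    (omOps R P0 A).vSum f = (omOps R P0 A).vadd (f i₀) (f i₁) := by
  funext w
  exact h.iSum_eq_pair (fun i => f i w) i₀ i₁ hne
    (fun i h1 h2 => congrFun (hz i h1 h2) w)

theorem omOps_vSum_prod (h : R.IsComplete) {ι κ : Type} (f : ι × κ → (ℕ → A) → S) :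
    (omOps R P0 A).vSum f
      = (omOps R P0 A).vSum (fun i => (omOps R P0 A).vSum (fun j : κ => f (i, j))) := by
  funext w
  exact h.iSum_prod (fun p => f p w)

theorem excursion_peel (h : R.IsComplete) (hP0 : P0.IsComplete R)
    (hsm : ∀ a b : S, P0.smul a b = R.mul a b) (M : IMat n (List A → S))
    (hroc : IsRoc (finOps R A) M) :
    ∀ (l : List (ℕ × Fin n)) (a : ℕ) (c j₂ : Fin n) (ℓ' : ℕ → ℕ) (st' : ℕ → Fin n),
      1 ≤ a → (∀ v ∈ l, 1 ≤ v.1) →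
      (omOps R P0 A).iProd (pathEntry M (a + 1) c
          (wcat (l.map (fun v => v.1 + 1) ++ [1]) ℓ') (wcat (l.map Prod.snd ++ [j₂]) st'))
        = (omOps R P0 A).smul (pw (finOps R A) M (a, c) (0, j₂) l)
            ((omOps R P0 A).iProd (pathEntry M 1 j₂ ℓ' st')) := by
  intro l
  induction l with
  | nil =>
    intro a c j₂ ℓ' st' ha _
    show (omOps R P0 A).iProd (pathEntry M (a + 1) c (wcat [1] ℓ') (wcat [j₂] st')) = _
    rw [wcat_singleton, wcat_singleton,
      iProd_pathEntry_cons h hP0 hsm M (a + 1) 1 c j₂ ℓ' st']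
    have hM : M (a + 1) 1 = M a 0 := by
      have hs := M_shift (finOps R A) M hroc a 0 ha
      simpa using hs
    rw [hM]
    rfl
  | cons v l ih =>
    intro a c j₂ ℓ' st' ha hl
    show (omOps R P0 A).iProd (pathEntry M (a + 1) c
        (wcat ((v.1 + 1) :: (l.map (fun v => v.1 + 1) ++ [1])) ℓ')
        (wcat (v.2 :: (l.map Prod.snd ++ [j₂])) st')) = _
    rw [wcat_cons, wcat_cons,
      iProd_pathEntry_cons h hP0 hsm M (a + 1) (v.1 + 1) c v.2 _ _,
      ih v.1 v.2 j₂ ℓ' st' (hl v (by simp)) (fun u hu => hl u (by simp [hu])),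
      ← omOps_mul_smul h]
    have hM : M (a + 1) (v.1 + 1) = M a v.1 := M_shift (finOps R A) M hroc a v.1 ha
    rw [hM]
    rfl

/-- The fixed-point equation for `(M^{ω,k})_p`. -/
theorem omega_sol (h : R.IsComplete) (hP0 : P0.IsComplete R)
    (hsm : ∀ a b : S, P0.smul a b = R.mul a b) {k : ℕ}
    (M : IMat n (List A → S)) (hroc : IsRoc (finOps R A) M) (i : Fin n) :
    mOmegaK (omOps R P0 A) M k 1 i
      = (omOps R P0 A).vadd ((omOps R P0 A).vadd
          ((omOps R P0 A).vSum fun m : Fin n =>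
            (omOps R P0 A).smul (M 1 2 i m) (mOmegaK (omOps R P0 A) M k 1 m))
          ((omOps R P0 A).vSum fun q : Fin n × Fin n =>
            (omOps R P0 A).smul ((finOps R A).mul (M 1 2 i q.1) (iStar (finOps R A) M 1 0 q.1 q.2))
              (mOmegaK (omOps R P0 A) M k 1 q.2)))
          ((omOps R P0 A).vSum fun m : Fin n =>
            (omOps R P0 A).smul (M 1 1 i m) (mOmegaK (omOps R P0 A) M k 1 m)) := by
  have hRsC : (finOps R A).IsComplete := finOps_isComplete h
  -- class `1`: stay
  have hC : (omOps R P0 A).vSum (fun q : {q : QT n k // q.1.1 0 = 1} =>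
        (omOps R P0 A).iProd (pathEntry M 1 i q.1.1.1 q.1.1.2))
      = (omOps R P0 A).vSum (fun m : Fin n =>
          (omOps R P0 A).smul (M 1 1 i m) (mOmegaK (omOps R P0 A) M k 1 m)) := by
    calc (omOps R P0 A).vSum (fun q : {q : QT n k // q.1.1 0 = 1} =>
            (omOps R P0 A).iProd (pathEntry M 1 i q.1.1.1 q.1.1.2))
        = (omOps R P0 A).vSum (fun p : Fin n × QT n k =>
            (omOps R P0 A).iProd (pathEntry M 1 i (cons0 1 p.2.1.1) (cons0 p.1 p.2.1.2))) :=
          (omOps_vSum_equiv' h (consQEquiv n k 1 (by omega)) (fun q =>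
            (omOps R P0 A).iProd (pathEntry M 1 i q.1.1.1 q.1.1.2))).symm
      _ = (omOps R P0 A).vSum (fun p : Fin n × QT n k =>
            (omOps R P0 A).smul (M 1 1 i p.1)
              ((omOps R P0 A).iProd (pathEntry M 1 p.1 p.2.1.1 p.2.1.2))) :=
          omOps_vSum_congr (fun p => iProd_pathEntry_cons h hP0 hsm M 1 1 i p.1 _ _)
      _ = (omOps R P0 A).vSum (fun m : Fin n => (omOps R P0 A).vSum (fun q' : QT n k =>
            (omOps R P0 A).smul (M 1 1 i m)
              ((omOps R P0 A).iProd (pathEntry M 1 m q'.1.1 q'.1.2)))) :=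
          omOps_vSum_prod h _
      _ = (omOps R P0 A).vSum (fun m : Fin n =>
            (omOps R P0 A).smul (M 1 1 i m) (mOmegaK (omOps R P0 A) M k 1 m)) :=
          omOps_vSum_congr (fun m => (omOps_smul_vSum h (M 1 1 i m) (fun q' : QT n k =>
            (omOps R P0 A).iProd (pathEntry M 1 m q'.1.1 q'.1.2))).symm)
  -- class `2`, no return
  have hA : (omOps R P0 A).vSum (fun q : {q : {q : QT n k // q.1.1 0 = 2} //
        ¬ ∃ t, q.1.1.1 t = 1} =>
        (omOps R P0 A).iProd (pathEntry M 1 i q.1.1.1.1 q.1.1.1.2))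
      = (omOps R P0 A).vSum (fun m : Fin n =>
          (omOps R P0 A).smul (M 1 2 i m) (mOmegaK (omOps R P0 A) M k 1 m)) := by
    have hsh : ∀ p : Fin n × QT n k,
        pathEntry M 2 p.1 (fun t => p.2.1.1 t + 1) p.2.1.2
          = pathEntry M 1 p.1 p.2.1.1 p.2.1.2 := by
      intro p
      funext t
      cases t with
      | zero =>
        have hMs := M_shift (finOps R A) M hroc 1 (p.2.1.1 0) (by omega)
        exact congrFun (congrFun hMs p.1) (p.2.1.2 0)
      | succ t =>
        have hMs := M_shift (finOps R A) M hroc (p.2.1.1 t) (p.2.1.1 (t + 1)) (p.2.2.1 t)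
        exact congrFun (congrFun hMs (p.2.1.2 t)) (p.2.1.2 (t + 1))
    calc (omOps R P0 A).vSum (fun q : {q : {q : QT n k // q.1.1 0 = 2} //
            ¬ ∃ t, q.1.1.1 t = 1} =>
            (omOps R P0 A).iProd (pathEntry M 1 i q.1.1.1.1 q.1.1.1.2))
        = (omOps R P0 A).vSum (fun p : Fin n × QT n k =>
            (omOps R P0 A).iProd (pathEntry M 1 i
              (cons0 2 (fun t => p.2.1.1 t + 1)) (cons0 p.1 p.2.1.2))) :=
          (omOps_vSum_equiv' h (upQEquiv n k) (fun q =>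
            (omOps R P0 A).iProd (pathEntry M 1 i q.1.1.1.1 q.1.1.1.2))).symm
      _ = (omOps R P0 A).vSum (fun p : Fin n × QT n k =>
            (omOps R P0 A).smul (M 1 2 i p.1)
              ((omOps R P0 A).iProd (pathEntry M 1 p.1 p.2.1.1 p.2.1.2))) := by
          apply omOps_vSum_congr
          intro p
          rw [iProd_pathEntry_cons h hP0 hsm M 1 2 i p.1 _ _, hsh p]
      _ = (omOps R P0 A).vSum (fun m : Fin n => (omOps R P0 A).vSum (fun q' : QT n k =>
            (omOps R P0 A).smul (M 1 2 i m)
              ((omOps R P0 A).iProd (pathEntry M 1 m q'.1.1 q'.1.2)))) :=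
          omOps_vSum_prod h _
      _ = (omOps R P0 A).vSum (fun m : Fin n =>
            (omOps R P0 A).smul (M 1 2 i m) (mOmegaK (omOps R P0 A) M k 1 m)) :=
          omOps_vSum_congr (fun m => (omOps_smul_vSum h (M 1 2 i m) (fun q' : QT n k =>
            (omOps R P0 A).iProd (pathEntry M 1 m q'.1.1 q'.1.2))).symm)
  -- class `2`, with return
  have hB : (omOps R P0 A).vSum (fun q : {q : {q : QT n k // q.1.1 0 = 2} //
        ∃ t, q.1.1.1 t = 1} =>
        (omOps R P0 A).iProd (pathEntry M 1 i q.1.1.1.1 q.1.1.1.2))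
      = (omOps R P0 A).vSum (fun qq : Fin n × Fin n =>
          (omOps R P0 A).smul ((finOps R A).mul (M 1 2 i qq.1) (iStar (finOps R A) M 1 0 qq.1 qq.2))
            (mOmegaK (omOps R P0 A) M k 1 qq.2)) := by
    have hterm : ∀ d : Fin n × Fin n × {l : List (ℕ × Fin n) // ∀ v ∈ l, 1 ≤ v.1} × QT n k,
        (omOps R P0 A).iProd (pathEntry M 1 i
          (wcat (2 :: (d.2.2.1.1.map (fun v => v.1 + 1) ++ [1])) d.2.2.2.1.1)
          (wcat (d.1 :: (d.2.2.1.1.map Prod.snd ++ [d.2.1])) d.2.2.2.1.2))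
        = (omOps R P0 A).smul (M 1 2 i d.1)
            ((omOps R P0 A).smul (pw (finOps R A) M (1, d.1) (0, d.2.1) d.2.2.1.1)
              ((omOps R P0 A).iProd (pathEntry M 1 d.2.1 d.2.2.2.1.1 d.2.2.2.1.2))) := by
      rintro ⟨j₁, j₂, ⟨l, hl⟩, q'⟩
      rw [wcat_cons, wcat_cons, iProd_pathEntry_cons h hP0 hsm M 1 2 i j₁ _ _]
      exact congrArg ((omOps R P0 A).smul (M 1 2 i j₁))
        (excursion_peel h hP0 hsm M hroc l 1 j₁ j₂ q'.1.1 q'.1.2 (by omega) hl)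
    have hxs : ∀ j₁ j₂ : Fin n,
        (omOps R P0 A).smul ((finOps R A).mul (M 1 2 i j₁) (iStar (finOps R A) M 1 0 j₁ j₂))
            (mOmegaK (omOps R P0 A) M k 1 j₂)
        = (omOps R P0 A).vSum (fun l : {l : List (ℕ × Fin n) // ∀ v ∈ l, 1 ≤ v.1} =>
            (omOps R P0 A).smul (M 1 2 i j₁)
              ((omOps R P0 A).smul (pw (finOps R A) M (1, j₁) (0, j₂) l.1)
                (mOmegaK (omOps R P0 A) M k 1 j₂))) := by
      intro j₁ j₂
      rw [star_expand (finOps R A) M hRsC 1 0 (by omega) j₁ j₂, hRsC.mul_iSum,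
        omOps_iSum_smul h]
      calc (omOps R P0 A).vSum (fun l : List (ℕ × Fin n) =>
              (omOps R P0 A).smul ((finOps R A).mul (M 1 2 i j₁)
                (pw (finOps R A) M (1, j₁) (0, j₂) l)) (mOmegaK (omOps R P0 A) M k 1 j₂))
          = (omOps R P0 A).vadd
              ((omOps R P0 A).vSum (fun l : {l : List (ℕ × Fin n) // ∀ v ∈ l, 1 ≤ v.1} =>
                (omOps R P0 A).smul ((finOps R A).mul (M 1 2 i j₁)
                  (pw (finOps R A) M (1, j₁) (0, j₂) l.1)) (mOmegaK (omOps R P0 A) M k 1 j₂)))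
              ((omOps R P0 A).vSum (fun l : {l : List (ℕ × Fin n) // ¬ ∀ v ∈ l, 1 ≤ v.1} =>
                (omOps R P0 A).smul ((finOps R A).mul (M 1 2 i j₁)
                  (pw (finOps R A) M (1, j₁) (0, j₂) l.1)) (mOmegaK (omOps R P0 A) M k 1 j₂))) :=
            omOps_vSum_split h _ _
        _ = (omOps R P0 A).vSum (fun l : {l : List (ℕ × Fin n) // ∀ v ∈ l, 1 ≤ v.1} =>
              (omOps R P0 A).smul (M 1 2 i j₁)
                ((omOps R P0 A).smul (pw (finOps R A) M (1, j₁) (0, j₂) l.1)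
                  (mOmegaK (omOps R P0 A) M k 1 j₂))) := by
            have hbad : (omOps R P0 A).vSum (fun l : {l : List (ℕ × Fin n) //
                ¬ ∀ v ∈ l, 1 ≤ v.1} =>
                (omOps R P0 A).smul ((finOps R A).mul (M 1 2 i j₁)
                  (pw (finOps R A) M (1, j₁) (0, j₂) l.1)) (mOmegaK (omOps R P0 A) M k 1 j₂))
                = (omOps R P0 A).vzero := by
              apply omOps_vSum_of_zero h
              rintro ⟨l, hl⟩
              push_neg at hl
              obtain ⟨v, hv, hv1⟩ := hl
              have hpw : pw (finOps R A) M (1, j₁) (0, j₂) l = (finOps R A).zero :=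
                pw_mem_zero (finOps R A) M hRsC hroc (1, j₁) (0, j₂) hv (by omega)
              rw [hpw, hRsC.mul_zero, omOps_zero_smul h]
            rw [hbad]
            have hgood : ∀ l : {l : List (ℕ × Fin n) // ∀ v ∈ l, 1 ≤ v.1},
                (omOps R P0 A).smul ((finOps R A).mul (M 1 2 i j₁)
                  (pw (finOps R A) M (1, j₁) (0, j₂) l.1)) (mOmegaK (omOps R P0 A) M k 1 j₂)
                = (omOps R P0 A).smul (M 1 2 i j₁)
                  ((omOps R P0 A).smul (pw (finOps R A) M (1, j₁) (0, j₂) l.1)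
                    (mOmegaK (omOps R P0 A) M k 1 j₂)) :=
              fun l => omOps_mul_smul h _ _ _
            rw [omOps_vSum_congr hgood]
            funext w
            exact h.add_zero _
    calc (omOps R P0 A).vSum (fun q : {q : {q : QT n k // q.1.1 0 = 2} //
            ∃ t, q.1.1.1 t = 1} =>
            (omOps R P0 A).iProd (pathEntry M 1 i q.1.1.1.1 q.1.1.1.2))
        = (omOps R P0 A).vSum (fun d : Fin n × Fin n ×
            {l : List (ℕ × Fin n) // ∀ v ∈ l, 1 ≤ v.1} × QT n k =>
            (omOps R P0 A).iProd (pathEntry M 1 i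
              (wcat (2 :: (d.2.2.1.1.map (fun v => v.1 + 1) ++ [1])) d.2.2.2.1.1)
              (wcat (d.1 :: (d.2.2.1.1.map Prod.snd ++ [d.2.1])) d.2.2.2.1.2))) :=
          (omOps_vSum_equiv' h (retEquiv n k) (fun q =>
            (omOps R P0 A).iProd (pathEntry M 1 i q.1.1.1.1 q.1.1.1.2))).symm
      _ = (omOps R P0 A).vSum (fun d : Fin n × Fin n ×
            {l : List (ℕ × Fin n) // ∀ v ∈ l, 1 ≤ v.1} × QT n k =>
            (omOps R P0 A).smul (M 1 2 i d.1)
              ((omOps R P0 A).smul (pw (finOps R A) M (1, d.1) (0, d.2.1) d.2.2.1.1)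
                ((omOps R P0 A).iProd (pathEntry M 1 d.2.1 d.2.2.2.1.1 d.2.2.2.1.2)))) :=
          omOps_vSum_congr hterm
      _ = (omOps R P0 A).vSum (fun j₁ : Fin n =>
            (omOps R P0 A).vSum (fun d : Fin n ×
              ({l : List (ℕ × Fin n) // ∀ v ∈ l, 1 ≤ v.1} × QT n k) =>
              (omOps R P0 A).smul (M 1 2 i j₁)
                ((omOps R P0 A).smul (pw (finOps R A) M (1, j₁) (0, d.1) d.2.1.1)
                  ((omOps R P0 A).iProd (pathEntry M 1 d.1 d.2.2.1.1 d.2.2.1.2))))) :=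
          omOps_vSum_prod h _
      _ = (omOps R P0 A).vSum (fun j₁ : Fin n => (omOps R P0 A).vSum (fun j₂ : Fin n =>
            (omOps R P0 A).vSum (fun d : {l : List (ℕ × Fin n) // ∀ v ∈ l, 1 ≤ v.1} × QT n k =>
              (omOps R P0 A).smul (M 1 2 i j₁)
                ((omOps R P0 A).smul (pw (finOps R A) M (1, j₁) (0, j₂) d.1.1)
                  ((omOps R P0 A).iProd (pathEntry M 1 j₂ d.2.1.1 d.2.1.2)))))) :=
          omOps_vSum_congr (fun j₁ => omOps_vSum_prod h _)
      _ = (omOps R P0 A).vSum (fun j₁ : Fin n => (omOps R P0 A).vSum (fun j₂ : Fin n =>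
            (omOps R P0 A).vSum (fun l : {l : List (ℕ × Fin n) // ∀ v ∈ l, 1 ≤ v.1} =>
              (omOps R P0 A).vSum (fun q' : QT n k =>
                (omOps R P0 A).smul (M 1 2 i j₁)
                  ((omOps R P0 A).smul (pw (finOps R A) M (1, j₁) (0, j₂) l.1)
                    ((omOps R P0 A).iProd (pathEntry M 1 j₂ q'.1.1 q'.1.2))))))) :=
          omOps_vSum_congr (fun j₁ => omOps_vSum_congr (fun j₂ => omOps_vSum_prod h _))
      _ = (omOps R P0 A).vSum (fun j₁ : Fin n => (omOps R P0 A).vSum (fun j₂ : Fin n =>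
            (omOps R P0 A).vSum (fun l : {l : List (ℕ × Fin n) // ∀ v ∈ l, 1 ≤ v.1} =>
              (omOps R P0 A).smul (M 1 2 i j₁)
                ((omOps R P0 A).smul (pw (finOps R A) M (1, j₁) (0, j₂) l.1)
                  (mOmegaK (omOps R P0 A) M k 1 j₂))))) := by
          apply omOps_vSum_congr; intro j₁
          apply omOps_vSum_congr; intro j₂
          apply omOps_vSum_congr; intro l
          rw [← omOps_smul_vSum h, ← omOps_smul_vSum h]
          rfl
      _ = (omOps R P0 A).vSum (fun j₁ : Fin n => (omOps R P0 A).vSum (fun j₂ : Fin n =>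
            (omOps R P0 A).smul ((finOps R A).mul (M 1 2 i j₁)
              (iStar (finOps R A) M 1 0 j₁ j₂)) (mOmegaK (omOps R P0 A) M k 1 j₂))) :=
          omOps_vSum_congr (fun j₁ => omOps_vSum_congr (fun j₂ => (hxs j₁ j₂).symm))
      _ = (omOps R P0 A).vSum (fun qq : Fin n × Fin n =>
            (omOps R P0 A).smul ((finOps R A).mul (M 1 2 i qq.1)
              (iStar (finOps R A) M 1 0 qq.1 qq.2)) (mOmegaK (omOps R P0 A) M k 1 qq.2)) :=
          (omOps_vSum_prod h (fun qq : Fin n × Fin n =>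
            (omOps R P0 A).smul ((finOps R A).mul (M 1 2 i qq.1)
              (iStar (finOps R A) M 1 0 qq.1 qq.2)) (mOmegaK (omOps R P0 A) M k 1 qq.2))).symm
  -- assemble
  show (omOps R P0 A).vSum (fun q : QT n k =>
      (omOps R P0 A).iProd (pathEntry M 1 i q.1.1 q.1.2)) = _
  rw [← omOps_vSum_partition h (fun q : QT n k => q.1.1 0)
      (fun q => (omOps R P0 A).iProd (pathEntry M 1 i q.1.1 q.1.2))]
  rw [omOps_vSum_eq_pair h _ 1 2 (by omega) ?hz]
  case hz =>
    intro m hm1 hm2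
    apply omOps_vSum_of_zero h
    rintro ⟨⟨⟨ℓ, st⟩, hq⟩, h0⟩
    have h0' : ℓ 0 = m := h0
    by_cases hm0 : m = 0
    · exfalso
      have hge : 1 ≤ ℓ 0 := hq.1 0
      omega
    · apply omOps_iProd_zero_head h hP0 hsm
      show M 1 (ℓ 0) i (st 0) = (finOps R A).zero
      rw [h0', M_no (finOps R A) M hroc (by omega) (by omega) (by omega)]
      rfl
  rw [hC]
  rw [omOps_vSum_split h (fun q : {q : QT n k // q.1.1 0 = 2} => ∃ t, q.1.1.1 t = 1)
    (fun q => (omOps R P0 A).iProd (pathEntry M 1 i q.1.1.1 q.1.1.2))]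
  rw [hB, hA]
  funext w
  show R.add _ (R.add _ _) = R.add (R.add _ _) _
  rw [h.add_comm]
  congr 1
  rw [h.add_comm]

end OmegaDecomp

/-- Let `S` be a complete star-omega semiring, `Σ = A` an
alphabet and `C = (n, I, M, P, k)` an `S⟨Σ∪{ε}⟩`-ω-restricted one-counter
automaton with `M_{p,p²} = (a_{ij})`, `M_{p,p} = (c_{ij})`, `M_{p,ε} = (b_{ij})`.
Then `(σ₀, ((M*)_{p,ε})_{ij}, τ₀, ((M^{ω,k})_p)_i)` is a solution of the
componentwise mixed algebraic system (6) over `(S⟪Σ*⟫, S⟪Σ^ω⟫)`, where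
`‖C‖ = (σ₀, τ₀)`. -/
theorem stmt_12 {S : Type} (R : CSOps S) (P0 : CPOps S S) (hR : R.IsComplete)
    (hP0 : P0.IsComplete R) (hsm : ∀ a b : S, P0.smul a b = R.mul a b)
    (A : Type) {n : ℕ} (hn : 1 ≤ n)
    (M : IMat n (List A → S)) (hM : IsRoc (finOps R A) M)
    (hMpoly : ∀ (i j : ℕ) (a b : Fin n), PolySupp R (M i j a b))
    (Iv : Fin n → List A → S) (hIpoly : ∀ m, PolySupp R (Iv m))
    (Pv : Fin n → List A → S) (hPpoly : ∀ m, PolySupp R (Pv m))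
    (k : ℕ) (hk : k ≤ n)
    (Rs : CSOps (List A → S)) (hRs : Rs = finOps R A)
    (Ps : CPOps (List A → S) ((ℕ → A) → S)) (hPs : Ps = omOps R P0 A)
    (x : Blk n (List A → S)) (hx : x = iStar Rs M 1 0)
    (z : Fin n → (ℕ → A) → S) (hz : z = mOmegaK Ps M k 1)
    (σ0 : List A → S) (hσ : σ0 = tripleProd Rs Iv x Pv)
    (τ0 : (ℕ → A) → S) (hτ : τ0 = rowAct Ps Iv z) :
    -- ‖C‖ = (σ₀, τ₀)
    rocBehavior Rs Ps M Iv Pv k = (σ0, τ0) ∧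
    -- x₀ = Σ_{m₁,m₂} I_{m₁} [m₁,p,m₂] P_{m₂}
    σ0 = Rs.iSum (fun q : Fin n × Fin n => Rs.mul (Iv q.1) (Rs.mul (x q.1 q.2) (Pv q.2))) ∧
    -- [i,p,j] = Σ_{m₁,m₂} a_{im₁}[m₁,p,m₂][m₂,p,j] + Σ_m c_{im}[m,p,j] + b_{ij}
    (∀ i j : Fin n,
      x i j = Rs.add (Rs.add
        (Rs.iSum fun q : Fin n × Fin n =>
          Rs.mul (M 1 2 i q.1) (Rs.mul (x q.1 q.2) (x q.2 j)))
        (Rs.iSum fun m : Fin n => Rs.mul (M 1 1 i m) (x m j)))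
        (M 1 0 i j)) ∧
    -- z₀ = Σ_m I_m [m,p]
    τ0 = Ps.vSum (fun m : Fin n => Ps.smul (Iv m) (z m)) ∧
    -- [i,p] = Σ_m a_{im}[m,p] + Σ_{m₁,m₂} a_{im₁}[m₁,p,m₂][m₂,p] + Σ_m c_{im}[m,p]
    (∀ i : Fin n,
      z i = Ps.vadd (Ps.vadd
        (Ps.vSum fun m : Fin n => Ps.smul (M 1 2 i m) (z m))
        (Ps.vSum fun q : Fin n × Fin n =>
          Ps.smul (Rs.mul (M 1 2 i q.1) (x q.1 q.2)) (z q.2)))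
        (Ps.vSum fun m : Fin n => Ps.smul (M 1 1 i m) (z m))) := by
  subst hσ
  subst hτ
  subst hx
  subst hz
  subst hRs
  subst hPs
  have hRsC : (finOps R A).IsComplete := finOps_isComplete hR
  refine ⟨rfl, rfl, ?_, rfl, ?_⟩
  · intro i j
    have hs : ∀ a b : Fin n, iStar (finOps R A) M 1 0 a b
        = (finOps R A).iSum (fun l : List (ℕ × Fin n) => pw (finOps R A) M (1, a) (0, b) l) :=
      fun a b => star_expand (finOps R A) M hRsC 1 0 (by omega) a b
    have eqC : (finOps R A).iSum (fun m : Fin n => (finOps R A).mul (M 1 1 i m)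
          (iStar (finOps R A) M 1 0 m j))
        = (finOps R A).iSum (fun cc : Fin n => (finOps R A).mul (M 1 1 i cc)
            ((finOps R A).iSum (fun l : List (ℕ × Fin n) =>
              pw (finOps R A) M (1, cc) (0, j) l))) :=
      hRsC.iSum_congr (fun m => by rw [hs m j])
    have eqA : (finOps R A).iSum (fun q : Fin n × Fin n => (finOps R A).mul (M 1 2 i q.1)
          ((finOps R A).mul (iStar (finOps R A) M 1 0 q.1 q.2) (iStar (finOps R A) M 1 0 q.2 j)))
        = (finOps R A).iSum (fun cc : Fin n => (finOps R A).mul (M 1 2 i cc)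
            ((finOps R A).iSum (fun l : List (ℕ × Fin n) =>
              pw (finOps R A) M (2, cc) (0, j) l))) := by
      calc (finOps R A).iSum (fun q : Fin n × Fin n => (finOps R A).mul (M 1 2 i q.1)
              ((finOps R A).mul (iStar (finOps R A) M 1 0 q.1 q.2)
                (iStar (finOps R A) M 1 0 q.2 j)))
          = (finOps R A).iSum (fun cc : Fin n => (finOps R A).iSum (fun d : Fin n =>
              (finOps R A).mul (M 1 2 i cc)
                ((finOps R A).mul (iStar (finOps R A) M 1 0 cc d)
                  (iStar (finOps R A) M 1 0 d j)))) :=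
            hRsC.iSum_prod (fun q : Fin n × Fin n => (finOps R A).mul (M 1 2 i q.1)
              ((finOps R A).mul (iStar (finOps R A) M 1 0 q.1 q.2)
                (iStar (finOps R A) M 1 0 q.2 j)))
        _ = (finOps R A).iSum (fun cc : Fin n => (finOps R A).iSum (fun d : Fin n =>
              (finOps R A).mul (M 1 2 i cc)
                ((finOps R A).mul
                  ((finOps R A).iSum (fun l : List (ℕ × Fin n) =>
                    pw (finOps R A) M (1, cc) (0, d) l))
                  ((finOps R A).iSum (fun l : List (ℕ × Fin n) =>
                    pw (finOps R A) M (1, d) (0, j) l))))) := by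
            apply hRsC.iSum_congr; intro cc
            apply hRsC.iSum_congr; intro d
            rw [hs cc d, hs d j]
        _ = (finOps R A).iSum (fun cc : Fin n => (finOps R A).mul (M 1 2 i cc)
              ((finOps R A).iSum (fun d : Fin n => (finOps R A).mul
                ((finOps R A).iSum (fun l : List (ℕ × Fin n) =>
                  pw (finOps R A) M (1, cc) (0, d) l))
                ((finOps R A).iSum (fun l : List (ℕ × Fin n) =>
                  pw (finOps R A) M (1, d) (0, j) l))))) :=
            hRsC.iSum_congr (fun cc => (hRsC.mul_iSum _ _).symm)
        _ = (finOps R A).iSum (fun cc : Fin n => (finOps R A).mul (M 1 2 i cc)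
              ((finOps R A).iSum (fun l : List (ℕ × Fin n) =>
                pw (finOps R A) M (2, cc) (0, j) l))) :=
            hRsC.iSum_congr (fun cc => by rw [← yL_eq (finOps R A) M hRsC hM cc j])
    rw [hs i j, eqA, eqC, xL_eq (finOps R A) M hRsC hM i j]
    have rear : ∀ X Y Z : List A → S, (finOps R A).add X ((finOps R A).add Y Z)
        = (finOps R A).add ((finOps R A).add Z Y) X := by
      intro X Y Z
      rw [hRsC.add_comm Y Z, hRsC.add_comm X ((finOps R A).add Z Y)]
    exact rear _ _ _
  · intro i
    exact omega_sol hR hP0 hsm M hM i
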